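/- arXiv:2507.18852 — 4 statements merged into one kernel-verified Lean document; each statement's English description precedes it below -/
import Mathlib

section
/- Let D be a reduced pipe dream and suppose the rectangle [h,i] × [j,k] of D has bump tiles exactly at (h,j), (i,k) (and possibly other positions only among the corners), with D(i,j) = + and all other non-corner tiles of the rectangle being crosses, where h = h_{ij}(D) and k = k_{ij}(D). Then D(h,k) cannot be a cross tile: if D(h,k) = +, then some pair of pipes crosses twice in the rectangle, contradicting reducedness. Hence D(h,k) is a bump tile. -/
open Finset

/-- A pipe dream is encoded as a tiling of the (1-indexed) grid:
`true` = cross tile (+), `false` = bump tile (•). -/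
abbrev PipeDream := ℕ × ℕ → Bool

namespace PipeDream

/-- All cross tiles lie in the staircase {(i,j) | 1 ≤ i, 1 ≤ j, i+j ≤ n+1}. -/
def InStaircase (n : ℕ) (D : PipeDream) : Prop :=
  ∀ i j, D (i, j) = true → 1 ≤ i ∧ 1 ≤ j ∧ i + j ≤ n + 1

/-- Reading word: rows top to bottom, within each row right to left; a cross at
(i,j) contributes the simple transposition s_{i+j-1}. -/
def word (n : ℕ) (D : PipeDream) : List ℕ :=
  (List.range n).flatMap (fun i =>
    ((List.range n).reverse.filterMap (fun j =>
      if D (i + 1, j + 1) = true then some (i + j + 1) else none)))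

/-- The permutation of ℕ realized by the wires of the pipe dream. -/
def perm (n : ℕ) (D : PipeDream) : Equiv.Perm ℕ :=
  (List.map (fun k => Equiv.swap k (k + 1)) (word n D)).prod

def crossCount (n : ℕ) (D : PipeDream) : ℕ := (word n D).length

/-- Number of inversions of w among 1..n (the Coxeter length of w ∈ S_n). -/
def invCount (w : Equiv.Perm ℕ) (n : ℕ) : ℕ :=
  (((Finset.Icc 1 n) ×ˢ (Finset.Icc 1 n)).filter
    (fun p => p.1 < p.2 ∧ w p.2 < w p.1)).card

/-- Reduced pipe dreams for w ∈ S_n: crosses in the staircase, wires realize w,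
and no two wires cross twice (equivalently, #crosses = ℓ(w)). -/
def RPD (n : ℕ) (w : Equiv.Perm ℕ) : Set PipeDream :=
  {D | InStaircase n D ∧ perm n D = w ∧ crossCount n D = invCount w n}

/-- (i,j) is a movable cross tile: a cross with a bump above it in column j. -/
def Movable (D : PipeDream) (i j : ℕ) : Prop :=
  D (i, j) = true ∧ ∃ h, 1 ≤ h ∧ h < i ∧ D (h, j) = false

/-- h_{ij}(D): largest h ∈ [1,i-1] with a bump at (h,j). -/
def hIdx (D : PipeDream) (i j : ℕ) : ℕ :=
  ((Finset.Ico 1 i).filter (fun h => D (h, j) = false)).sup id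

/-- k_{ij}(D): least k ∈ [j+1,n] with a bump at (i,k). -/
def kIdx (n : ℕ) (D : PipeDream) (i j : ℕ) : ℕ :=
  WithTop.untopD 0 (((Finset.Icc (j + 1) n).filter (fun k => D (i, k) = false)).min)

/-- Rect_{ij}(D) = [h,i] × [j,k]. -/
def Rect (n : ℕ) (D : PipeDream) (i j : ℕ) : Finset (ℕ × ℕ) :=
  Finset.Icc (hIdx D i j, j) (i, kIdx n D i j)

/-- max_bump_row_{ij}(D): largest p ∈ [h,i) whose row contains a bump tile in Rect. -/
def maxBumpRow (n : ℕ) (D : PipeDream) (i j : ℕ) : ℕ :=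
  ((Finset.Ico (hIdx D i j) i).filter
    (fun p => ∃ q ∈ Finset.Icc j (kIdx n D i j), D (p, q) = false)).sup id

/-- min_bump_col_{ij}(D): least q ∈ (j,k] whose column contains a bump tile in Rect. -/
def minBumpCol (n : ℕ) (D : PipeDream) (i j : ℕ) : ℕ :=
  WithTop.untopD 0
    (((Finset.Icc (j + 1) (kIdx n D i j)).filter
      (fun q => ∃ p ∈ Finset.Icc (hIdx D i j) i, D (p, q) = false)).min)

/-- (i,j) is ladder movable: the bumps of Rect_{ij}(D) are exactly the three
corners (h,j), (h,k), (i,k). -/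
def LadderMovable (n : ℕ) (D : PipeDream) (i j : ℕ) : Prop :=
  Movable D i j ∧
    ∀ p q, (p, q) ∈ Rect n D i j →
      (D (p, q) = false ↔
        ((p, q) = (hIdx D i j, j) ∨ (p, q) = (hIdx D i j, kIdx n D i j) ∨
          (p, q) = (i, kIdx n D i j)))

/-- Generalized ladder move L_{ij}: swap the cross at (i,j) with the bump at (h,k). -/
def ladderMove (n : ℕ) (D : PipeDream) (i j : ℕ) : PipeDream :=
  fun st =>
    if st = (i, j) then false
    else if st = (hIdx D i j, kIdx n D i j) then true
    else D st

/-- One covering step of the ladder-move order on RPD(w). -/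
def LadderStep (n : ℕ) (D Q : PipeDream) : Prop :=
  ∃ i j, LadderMovable n D i j ∧ Q = ladderMove n D i j

/-- D ≤ Q in the ladder-move order (Q is obtained from D by a possibly empty
sequence of generalized ladder moves). -/
def ladderLE (n : ℕ) (D Q : PipeDream) : Prop :=
  Relation.ReflTransGen (LadderStep n) D Q

/-- One ladder-move step performed at a position northeast of (i,j). -/
def LadderStepNE (n i j : ℕ) (D Q : PipeDream) : Prop :=
  ∃ p q, p ≤ i ∧ j ≤ q ∧ LadderMovable n D p q ∧ Q = ladderMove n D p q

/-- V_{ij}(D): pipe dreams reachable from D by ladder moves at positions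
northeast of (i,j), having a bump at (i,j). -/
def V (n : ℕ) (D : PipeDream) (i j : ℕ) : Set PipeDream :=
  {Q | Relation.ReflTransGen (LadderStepNE n i j) D Q ∧ Q (i, j) = false}

/-- Auxiliary construction of Path_{ij}(D), with fuel (the row number strictly
decreases at each step, so fuel `i` always suffices). -/
def pathAux (n : ℕ) (D : PipeDream) (j : ℕ) : ℕ → ℕ × ℕ → Finset (ℕ × ℕ)
  | 0, _ => ∅
  | fuel + 1, (p, q) =>
      let p' := maxBumpRow n D p j
      let q' := WithTop.untopD j
        (((Finset.Icc j n).filter (fun t => D (p', t) = false)).min)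
      let seg := ((Finset.Icc p' p).image fun r => (r, q)) ∪
        ((Finset.Icc q' q).image fun t => (p', t))
      if q' = j then seg else seg ∪ pathAux n D j fuel (p', q')

/-- Path_{ij}(D): the lattice path from (i, k_{ij}(D)) to (h_{ij}(D), j). -/
def Path (n : ℕ) (D : PipeDream) (i j : ℕ) : Finset (ℕ × ℕ) :=
  pathAux n D j i (i, kIdx n D i j)

open scoped Classical in
/-- Shape_{ij}(D): tiles of Rect_{ij}(D) weakly below Path_{ij}(D). -/
noncomputable def Shape (n : ℕ) (D : PipeDream) (i j : ℕ) : Finset (ℕ × ℕ) :=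
  (Rect n D i j).filter fun st => ∃ p' ≤ st.1, (p', st.2) ∈ Path n D i j

/-- The move operation M_{ij} of Definition 3.4, written with fuel:
(i) if max_bump_row = h and min_bump_col = k, apply the ladder move L_{ij};
(ii) if max_bump_row = a > h, recurse as M_{ij} ∘ M_{aj};
(iii) otherwise recurse as M_{ij} ∘ M_{ib} with b = min_bump_col. -/
def moveAux (n : ℕ) : ℕ → PipeDream → ℕ → ℕ → PipeDream
  | 0, D, _, _ => D
  | fuel + 1, D, i, j =>
      if maxBumpRow n D i j = hIdx D i j ∧ minBumpCol n D i j = kIdx n D i j then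
        ladderMove n D i j
      else if hIdx D i j < maxBumpRow n D i j then
        moveAux n fuel (moveAux n fuel D (maxBumpRow n D i j) j) i j
      else
        moveAux n fuel (moveAux n fuel D i (minBumpCol n D i j)) i j

/-- The move operation M_{ij}.  The fuel `(n+2)^(n+2)` vastly exceeds the depth
of the recursion of Definition 3.4, so `move` agrees with M on all inputs for
which the recursion makes sense. -/
def move (n : ℕ) (D : PipeDream) (i j : ℕ) : PipeDream :=
  moveAux n ((n + 2) ^ (n + 2)) D i j

/-- (p,q) is northeast of (i,j). -/
def NorthEastOf (p q i j : ℕ) : Prop := p ≤ i ∧ j ≤ q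

/-- (i,j) and (p,q) are southwest-incomparable. -/
def SWIncomparable (i j p q : ℕ) : Prop := (i < p ∧ j < q) ∨ (p < i ∧ q < j)

end PipeDream


namespace Stmt1Aux

/-- adjacent swap -/
def sw (t : ℕ) : Equiv.Perm ℕ := Equiv.swap t (t + 1)

/-- product of adjacent swaps of a list (leftmost applied last) -/
def ps (L : List ℕ) : Equiv.Perm ℕ := (L.map sw).prod

@[simp] lemma ps_nil : ps [] = 1 := rfl

lemma ps_cons (a : ℕ) (L : List ℕ) : ps (a :: L) = sw a * ps L := by
  simp [ps]

lemma ps_append (A B : List ℕ) : ps (A ++ B) = ps A * ps B := by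
  simp [ps]

lemma ps_single (t : ℕ) : ps [t] = sw t := by simp [ps]

lemma sw_fix {x t : ℕ} (h1 : x ≠ t) (h2 : x ≠ t + 1) : sw t x = x :=
  Equiv.swap_apply_of_ne_of_ne h1 h2

lemma ps_fix {L : List ℕ} {x : ℕ} (h : ∀ t ∈ L, x ≠ t ∧ x ≠ t + 1) : ps L x = x := by
  induction L with
  | nil => rfl
  | cons a L ih =>
    rw [ps_cons, Equiv.Perm.mul_apply, ih (fun t ht => h t (by simp [ht]))]
    exact sw_fix (h a (by simp)).1 (h a (by simp)).2

/-- the descending list [r+len-1, ..., r] -/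
def dList (r len : ℕ) : List ℕ := (List.range' r len).reverse

@[simp] lemma dList_zero (r : ℕ) : dList r 0 = [] := rfl

lemma dList_succ (r len : ℕ) : dList r (len + 1) = (r + len) :: dList r len := by
  simp [dList, List.range'_1_concat]

lemma mem_dList {t r len : ℕ} : t ∈ dList r len ↔ r ≤ t ∧ t < r + len := by
  simp only [dList, List.mem_reverse, List.mem_range']
  constructor
  · rintro ⟨i, hi, rfl⟩; omega
  · intro h; exact ⟨t - r, by omega, by omega⟩

lemma ps_dList_lo {x r len : ℕ} (h : x < r) : ps (dList r len) x = x :=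
  ps_fix (fun t ht => by rw [mem_dList] at ht; omega)

lemma ps_dList_hi {x r len : ℕ} (h : r + len < x) : ps (dList r len) x = x :=
  ps_fix (fun t ht => by rw [mem_dList] at ht; omega)

lemma ps_dList_bottom (r len : ℕ) : ps (dList r len) r = r + len := by
  induction len with
  | zero => simp
  | succ len ih =>
    rw [dList_succ, ps_cons, Equiv.Perm.mul_apply, ih, sw, Equiv.swap_apply_left]
    omega

lemma ps_dList_shift {x r len : ℕ} (h1 : r < x) (h2 : x ≤ r + len) :
    ps (dList r len) x = x - 1 := by
  induction len with
  | zero => omega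
  | succ len ih =>
    rw [dList_succ, ps_cons, Equiv.Perm.mul_apply]
    rcases Nat.lt_or_ge (r + len) x with hc | hc
    · have hx : x = r + len + 1 := by omega
      rw [ps_dList_hi (by omega), hx, sw]
      rw [show r + len + 1 = (r + len) + 1 from rfl, Equiv.swap_apply_right]
      omega
    · rw [ih (by omega)]
      exact sw_fix (by omega) (by omega)

/-! ### inversion counting -/

open PipeDream in
lemma invCount_one (n : ℕ) : invCount 1 n = 0 := by
  rw [invCount, Finset.card_eq_zero, Finset.filter_eq_empty_iff]
  rintro ⟨p, q⟩ _
  simp only [Equiv.Perm.one_apply, not_and]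
  omega

open PipeDream in
lemma invCount_sw_mul (a n : ℕ) (σ : Equiv.Perm ℕ) :
    invCount (sw a * σ) n ≤ invCount σ n + 1 := by
  classical
  rw [invCount, invCount]
  set P := (Finset.Icc 1 n) ×ˢ (Finset.Icc 1 n) with hP
  have hsub : P.filter (fun p => p.1 < p.2 ∧ (sw a * σ) p.2 < (sw a * σ) p.1) ⊆
      (P.filter (fun p => p.1 < p.2 ∧ σ p.2 < σ p.1)) ∪ {(σ⁻¹ a, σ⁻¹ (a + 1))} := by
    rintro ⟨p, q⟩ hm
    rw [Finset.mem_filter] at hm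
    obtain ⟨hmP, hpq, hlt⟩ := hm
    dsimp only at hpq hlt
    rw [Finset.mem_union, Finset.mem_filter]
    by_cases hσ : σ q < σ p
    · exact Or.inl ⟨hmP, hpq, hσ⟩
    · right
      have hne : σ p ≠ σ q := fun he => by
        have := σ.injective he; omega
      have hlt' : σ p < σ q := by omega
      rw [Equiv.Perm.mul_apply, Equiv.Perm.mul_apply, sw,
        Equiv.swap_apply_def, Equiv.swap_apply_def] at hlt
      have key : σ p = a ∧ σ q = a + 1 := by
        split_ifs at hlt <;> omega
      have hp' : p = σ⁻¹ a := by
        rw [← key.1]; exact (by simp : σ⁻¹ (σ p) = p).symm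
      have hq' : q = σ⁻¹ (a + 1) := by
        rw [← key.2]; exact (by simp : σ⁻¹ (σ q) = q).symm
      simp [hp', hq']
  calc (P.filter (fun p => p.1 < p.2 ∧ (sw a * σ) p.2 < (sw a * σ) p.1)).card
      ≤ ((P.filter (fun p => p.1 < p.2 ∧ σ p.2 < σ p.1)) ∪ {(σ⁻¹ a, σ⁻¹ (a + 1))}).card :=
        Finset.card_le_card hsub
    _ ≤ (P.filter (fun p => p.1 < p.2 ∧ σ p.2 < σ p.1)).card + 1 :=
        le_trans (Finset.card_union_le _ _) (by simp)

open PipeDream in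
lemma invCount_ps_le (L : List ℕ) (n : ℕ) : invCount (ps L) n ≤ L.length := by
  induction L with
  | nil => simp [invCount_one]
  | cons a L ih =>
    rw [ps_cons]
    calc invCount (sw a * ps L) n ≤ invCount (ps L) n + 1 := invCount_sw_mul a n (ps L)
      _ ≤ L.length + 1 := by omega
      _ = (a :: L).length := by simp


/-! ### row segments of pipe dream words -/

/-- the letters contributed by row `p` (0-indexed), columns `a, ..., a+len-1`
(0-indexed), read right-to-left. -/
def rowSeg (D : PipeDream) (p a len : ℕ) : List ℕ :=
  (List.range' a len).reverse.filterMap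
    (fun q => if D (p + 1, q + 1) = true then some (p + q + 1) else none)

@[simp] lemma rowSeg_zero (D : PipeDream) (p a : ℕ) : rowSeg D p a 0 = [] := rfl

lemma rowSeg_split (D : PipeDream) (p a l₁ l₂ : ℕ) :
    rowSeg D p a (l₁ + l₂) = rowSeg D p (a + l₁) l₂ ++ rowSeg D p a l₁ := by
  have h : List.range' a (l₁ + l₂) = List.range' a l₁ ++ List.range' (a + l₁) l₂ := by
    rw [List.range'_append_1, Nat.add_comm]
  rw [rowSeg, h, List.reverse_append, List.filterMap_append]
  rfl

lemma rowSeg_one (D : PipeDream) (p a : ℕ) :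
    rowSeg D p a 1 = if D (p + 1, a + 1) = true then [p + a + 1] else [] := by
  rw [rowSeg]
  by_cases h : D (p + 1, a + 1) = true <;>
    simp [List.range'_one, List.filterMap_cons, h]

lemma rowSeg_cross {D : PipeDream} {p a len : ℕ}
    (h : ∀ q, a ≤ q → q < a + len → D (p + 1, q + 1) = true) :
    rowSeg D p a len = dList (p + a + 1) len := by
  induction len with
  | zero => rfl
  | succ len ih =>
    rw [show len + 1 = len + 1 from rfl, rowSeg_split, rowSeg_one,
      if_pos (h _ (by omega) (by omega)),
      ih (fun q h1 h2 => h q h1 (by omega)), dList_succ, List.singleton_append,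
      show p + (a + len) + 1 = p + a + 1 + len from by omega]

lemma mem_rowSeg {D : PipeDream} {p a len t : ℕ} (h : t ∈ rowSeg D p a len) :
    p + a + 1 ≤ t ∧ t < p + a + 1 + len := by
  rw [rowSeg, List.mem_filterMap] at h
  obtain ⟨q, hq, he⟩ := h
  rw [List.mem_reverse, List.mem_range'] at hq
  obtain ⟨i, hi, rfl⟩ := hq
  split_ifs at he
  cases he; omega

lemma rowSeg_congr {D₁ D₂ : PipeDream} {p a len : ℕ}
    (h : ∀ q, a ≤ q → q < a + len → D₁ (p + 1, q + 1) = D₂ (p + 1, q + 1)) :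
    rowSeg D₁ p a len = rowSeg D₂ p a len := by
  induction len with
  | zero => rfl
  | succ len ih =>
    rw [show len + 1 = len + 1 from rfl, rowSeg_split, rowSeg_split, rowSeg_one, rowSeg_one,
      h _ (by omega) (by omega), ih (fun q h1 h2 => h q h1 (by omega))]

lemma flatMap_congr {α β : Type*} {f g : α → List β} :
    ∀ (l : List α), (∀ x ∈ l, f x = g x) → l.flatMap f = l.flatMap g
  | [], _ => rfl
  | a :: l, h => by
    rw [List.flatMap_cons, List.flatMap_cons, h a (by simp),
      flatMap_congr l (fun x hx => h x (by simp [hx]))]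

lemma word_eq (n : ℕ) (D : PipeDream) :
    PipeDream.word n D = (List.range' 0 n).flatMap (fun p => rowSeg D p 0 n) := by
  rw [PipeDream.word]
  simp only [List.range_eq_range']
  rfl

lemma range'_split (a m n : ℕ) (hmn : m ≤ n) :
    List.range' a n = List.range' a m ++ List.range' (a + m) (n - m) := by
  conv_lhs => rw [show n = (n - m) + m from by omega]
  rw [Nat.add_comm (n - m) m]
  exact (List.range'_append_1 (s := a) (m := m) (n := n - m)).symm

/-- evaluation of a full middle row: all entries in (1-indexed) columns
`j..k` of (1-indexed) row `p+1` are crosses. -/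
lemma rowEval {D : PipeDream} {n p j k x : ℕ} (hj : 1 ≤ j) (hjk : j + 1 ≤ k) (hkn : k ≤ n)
    (hc : ∀ q, j - 1 ≤ q → q < k → D (p + 1, q + 1) = true)
    (hx1 : p + j < x) (hx2 : x ≤ p + k + 1) :
    ps (rowSeg D p 0 n) x = x - 1 := by
  have hsplit : rowSeg D p 0 n =
      rowSeg D p k (n - k) ++ rowSeg D p (j - 1) (k - (j - 1)) ++ rowSeg D p 0 (j - 1) := by
    have e1 : rowSeg D p 0 n = rowSeg D p (j - 1) (n - (j - 1)) ++ rowSeg D p 0 (j - 1) := by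
      conv_lhs => rw [show n = (j - 1) + (n - (j - 1)) from by omega]
      rw [rowSeg_split, Nat.zero_add]
    have e2 : rowSeg D p (j - 1) (n - (j - 1)) =
        rowSeg D p k (n - k) ++ rowSeg D p (j - 1) (k - (j - 1)) := by
      conv_lhs => rw [show n - (j - 1) = (k - (j - 1)) + (n - k) from by omega]
      rw [rowSeg_split, show j - 1 + (k - (j - 1)) = k from by omega]
    rw [e1, e2]
  have hd : rowSeg D p (j - 1) (k - (j - 1)) = dList (p + (j - 1) + 1) (k - (j - 1)) :=
    rowSeg_cross (fun q h1 h2 => hc q h1 (by omega))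
  rw [hsplit, ps_append, ps_append, Equiv.Perm.mul_apply, Equiv.Perm.mul_apply]
  rw [ps_fix (L := rowSeg D p 0 (j - 1)) (fun t ht => by
    have := mem_rowSeg ht; omega)]
  rw [hd, ps_dList_shift (by omega) (by omega)]
  exact ps_fix (fun t ht => by have := mem_rowSeg ht; omega)

/-- evaluation through a block of full middle rows (0-indexed rows `r..r+len-1`). -/
lemma midEval {D : PipeDream} {n j k i h : ℕ} (hj : 1 ≤ j) (hjk : j + 1 ≤ k) (hkn : k ≤ n)
    (hc : ∀ p q, h + 1 ≤ p → p + 1 ≤ i → j ≤ q → q ≤ k → D (p, q) = true) :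
    ∀ len r x, h ≤ r → r + len + 1 ≤ i → r + len + j ≤ x → x ≤ r + len + k →
      ps ((List.range' r len).flatMap (fun p => rowSeg D p 0 n)) x = x - len := by
  intro len
  induction len with
  | zero => intro r x _ _ _ _; simp
  | succ len ih =>
    intro r x hr hi hx1 hx2
    rw [List.range'_succ, List.flatMap_cons, ps_append, Equiv.Perm.mul_apply]
    rw [ih (r + 1) x (by omega) (by omega) (by omega) (by omega)]
    rw [rowEval (p := r) hj hjk hkn
      (fun q h1 h2 => hc (r + 1) (q + 1) (by omega) (by omega) (by omega) (by omega))
      (by omega) (by omega)]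
    omega


/-- deleting two letters whose swaps "cancel through" the middle segment. -/
lemma ps_middle_cancel {H M T : List ℕ} {t₁ t₂ : ℕ}
    (hkey : sw t₁ * (ps M * sw t₂) = ps M) :
    ps (H ++ [t₁] ++ M ++ [t₂] ++ T) = ps (H ++ M ++ T) := by
  simp only [ps_append, ps_single]
  have h2 : ps H * sw t₁ * ps M * sw t₂ = ps H * (sw t₁ * (ps M * sw t₂)) := by
    simp [mul_assoc]
  rw [h2, hkey]

end Stmt1Aux

open PipeDream in
/-- if every bump tile in Rect_{ij}(D) is among the three corners
(h,j), (h,k), (i,k), then D(h,k) must itself be a bump tile (else two pipes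
would cross twice, contradicting reducedness). -/
theorem stmt1 (n : ℕ) (w : Equiv.Perm ℕ) (D : PipeDream) (hD : D ∈ RPD n w)
    (i j : ℕ) (hmov : Movable D i j)
    (hbumps : ∀ p q, (p, q) ∈ Rect n D i j → D (p, q) = false →
      (p, q) = (hIdx D i j, j) ∨ (p, q) = (hIdx D i j, kIdx n D i j) ∨
        (p, q) = (i, kIdx n D i j)) :
    D (hIdx D i j, kIdx n D i j) = false := by
  classical
  open Stmt1Aux in
  obtain ⟨hst, hperm, hcount⟩ := hD
  obtain ⟨hij, h₁, h₁1, h₁lt, h₁b⟩ := hmov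
  have hstair := hst i j hij
  -- facts about h = hIdx D i j
  have hSne : ((Finset.Ico 1 i).filter fun h => D (h, j) = false).Nonempty :=
    ⟨h₁, by rw [Finset.mem_filter, Finset.mem_Ico]; exact ⟨⟨h₁1, h₁lt⟩, h₁b⟩⟩
  have hmemh : hIdx D i j ∈ (Finset.Ico 1 i).filter fun h => D (h, j) = false := by
    have hmax := Finset.max'_mem _ hSne
    rwa [Finset.max'_eq_sup', Finset.sup'_eq_sup] at hmax
  rw [Finset.mem_filter, Finset.mem_Ico] at hmemh
  obtain ⟨⟨hh1, hhi⟩, hhj⟩ := hmemh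
  -- case on whether there is a bump to the right of (i,j) in row i
  rcases eq_or_ne (((Finset.Icc (j + 1) n).filter fun q => D (i, q) = false).min) ⊤
    with hkm | hkm
  · -- no bump: kIdx = 0, and tiles in column 0 are never crosses
    have hk0 : kIdx n D i j = 0 := by
      unfold PipeDream.kIdx
      rw [hkm, WithTop.untopD_top]
    rw [hk0]
    cases hv : D (hIdx D i j, 0) with
    | false => rfl
    | true => exact absurd (hst _ _ hv).2.1 (by omega)
  · obtain ⟨m, hm⟩ := WithTop.ne_top_iff_exists.mp hkm
    have hkval : kIdx n D i j = m := by
      unfold PipeDream.kIdx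
      rw [← hm, WithTop.untopD_coe]
    have hmmem := Finset.mem_of_min hm.symm
    rw [Finset.mem_filter, Finset.mem_Icc] at hmmem
    obtain ⟨⟨hjm, hmn⟩, hmb⟩ := hmmem
    rw [hkval]
    cases hDhk : D (hIdx D i j, m) with
    | false => rfl
    | true =>
    exfalso
    obtain ⟨a, ha⟩ : ∃ a, hIdx D i j = a + 1 := ⟨hIdx D i j - 1, by omega⟩
    obtain ⟨b, hb⟩ : ∃ b, i = b + 1 := ⟨i - 1, by omega⟩
    obtain ⟨c, hc⟩ : ∃ c, j = c + 1 := ⟨j - 1, by omega⟩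
    obtain ⟨d, hd⟩ : ∃ d, m = d + 1 := ⟨m - 1, by omega⟩
    subst hb hc hd
    rw [ha] at hDhk hhj hhi hh1
    rw [ha, hkval] at hbumps
    -- basic inequalities
    have hab : a < b := by omega
    have hcd : c < d := by omega
    have hdn : d + 1 ≤ n := hmn
    have hbn : b + c + 1 ≤ n := by omega
    -- membership in the rectangle
    have hrect : ∀ p q, a + 1 ≤ p → p ≤ b + 1 → c + 1 ≤ q → q ≤ d + 1 →
        (p, q) ∈ Rect n D (b + 1) (c + 1) := by
      intro p q hp1 hp2 hq1 hq2
      have hre : Rect n D (b + 1) (c + 1) = Finset.Icc (a + 1, c + 1) (b + 1, d + 1) := by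
        unfold PipeDream.Rect
        rw [ha, hkval]
      rw [hre, Finset.mem_Icc]
      exact ⟨Prod.mk_le_mk.mpr ⟨hp1, hq1⟩, Prod.mk_le_mk.mpr ⟨hp2, hq2⟩⟩
    -- every non-corner tile of the rectangle is a cross
    have hcross : ∀ p q, a + 1 ≤ p → p ≤ b + 1 → c + 1 ≤ q → q ≤ d + 1 →
        ¬(p = a + 1 ∧ q = c + 1) → ¬(p = a + 1 ∧ q = d + 1) → ¬(p = b + 1 ∧ q = d + 1) →
        D (p, q) = true := by
      intro p q hp1 hp2 hq1 hq2 e1 e2 e3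
      cases hv : D (p, q) with
      | true => rfl
      | false =>
        rcases hbumps p q (hrect p q hp1 hp2 hq1 hq2) hv with he | he | he <;>
          (rw [Prod.mk.injEq] at he; tauto)
    -- the modified pipe dream with the two crossing tiles removed
    set D' : PipeDream := fun st =>
      if st = (b + 1, c + 1) then false else if st = (a + 1, d + 1) then false
      else D st with hD'
    have hD'eq : ∀ p q : ℕ, ¬(p = b + 1 ∧ q = c + 1) → ¬(p = a + 1 ∧ q = d + 1) →
        D' (p, q) = D (p, q) := by
      intro p q e1 e2
      simp only [hD', Prod.mk.injEq]
      rw [if_neg (by tauto), if_neg (by tauto)]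
    have hD'ij : D' (b + 1, c + 1) = false := by simp [hD']
    have hD'hk : D' (a + 1, d + 1) = false := by
      have hne : ((a + 1 : ℕ), (d + 1 : ℕ)) ≠ (b + 1, c + 1) := by
        simp only [ne_eq, Prod.mk.injEq, not_and]
        omega
      simp only [hD']
      rw [if_neg hne]
      simp
    -- splitting a full row at a single column
    have hrowsplit : ∀ (E : PipeDream) (p s : ℕ), s < n →
        rowSeg E p 0 n =
          rowSeg E p (s + 1) (n - (s + 1)) ++ rowSeg E p s 1 ++ rowSeg E p 0 s := by
      intro E p s hs
      have e1 : rowSeg E p 0 n = rowSeg E p s (n - s) ++ rowSeg E p 0 s := by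
        conv_lhs => rw [show n = s + (n - s) from by omega]
        rw [rowSeg_split, Nat.zero_add]
      have e2 : rowSeg E p s (n - s) =
          rowSeg E p (s + 1) (n - (s + 1)) ++ rowSeg E p s 1 := by
        conv_lhs => rw [show n - s = 1 + (n - (s + 1)) from by omega]
        rw [rowSeg_split]
      rw [e1, e2]
    -- splitting the list of rows
    have hrange : List.range' 0 n = List.range' 0 a ++ List.range' a 1 ++
        List.range' (a + 1) (b - (a + 1)) ++ List.range' b 1 ++
        List.range' (b + 1) (n - (b + 1)) := by
      rw [range'_split 0 a n (by omega), Nat.zero_add,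
        range'_split a 1 (n - a) (by omega),
        range'_split (a + 1) (b - (a + 1)) (n - a - 1) (by omega),
        show a + 1 + (b - (a + 1)) = b from by omega,
        show n - a - 1 - (b - (a + 1)) = n - b from by omega,
        range'_split b 1 (n - b) (by omega),
        show n - b - 1 = n - (b + 1) from by omega]
      simp only [List.append_assoc]
    -- the rows of D
    have hrowa : rowSeg D a 0 n =
        rowSeg D a (d + 1) (n - (d + 1)) ++ [a + d + 1] ++ rowSeg D a 0 d := by
      rw [hrowsplit D a d (by omega), rowSeg_one, if_pos hDhk]
    have hrowb : rowSeg D b 0 n =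
        rowSeg D b (c + 1) (n - (c + 1)) ++ [b + c + 1] ++ rowSeg D b 0 c := by
      rw [hrowsplit D b c (by omega), rowSeg_one, if_pos hij]
    -- the rows of D'
    have hrowa' : rowSeg D' a 0 n =
        rowSeg D a (d + 1) (n - (d + 1)) ++ rowSeg D a 0 d := by
      have e1 : rowSeg D' a (d + 1) (n - (d + 1)) = rowSeg D a (d + 1) (n - (d + 1)) :=
        rowSeg_congr (fun q hq1 hq2 => hD'eq (a + 1) (q + 1) (by omega) (by omega))
      have e2 : rowSeg D' a 0 d = rowSeg D a 0 d :=
        rowSeg_congr (fun q hq1 hq2 => hD'eq (a + 1) (q + 1) (by omega) (by omega))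
      rw [hrowsplit D' a d (by omega), e1, e2, rowSeg_one, hD'hk]
      simp
    have hrowb' : rowSeg D' b 0 n =
        rowSeg D b (c + 1) (n - (c + 1)) ++ rowSeg D b 0 c := by
      have e1 : rowSeg D' b (c + 1) (n - (c + 1)) = rowSeg D b (c + 1) (n - (c + 1)) :=
        rowSeg_congr (fun q hq1 hq2 => hD'eq (b + 1) (q + 1) (by omega) (by omega))
      have e2 : rowSeg D' b 0 c = rowSeg D b 0 c :=
        rowSeg_congr (fun q hq1 hq2 => hD'eq (b + 1) (q + 1) (by omega) (by omega))
      rw [hrowsplit D' b c (by omega), e1, e2, rowSeg_one, hD'ij]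
      simp
    -- untouched row blocks
    have hW1 : (List.range' 0 a).flatMap (fun p => rowSeg D' p 0 n) =
        (List.range' 0 a).flatMap (fun p => rowSeg D p 0 n) :=
      flatMap_congr _ (fun x hx => by
        rw [List.mem_range'] at hx
        obtain ⟨t, ht, rfl⟩ := hx
        exact rowSeg_congr (fun q _ _ => hD'eq _ _ (by omega) (by omega)))
    have hWmid : (List.range' (a + 1) (b - (a + 1))).flatMap (fun p => rowSeg D' p 0 n) =
        (List.range' (a + 1) (b - (a + 1))).flatMap (fun p => rowSeg D p 0 n) :=
      flatMap_congr _ (fun x hx => by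
        rw [List.mem_range'] at hx
        obtain ⟨t, ht, rfl⟩ := hx
        exact rowSeg_congr (fun q _ _ => hD'eq _ _ (by omega) (by omega)))
    have hW2 : (List.range' (b + 1) (n - (b + 1))).flatMap (fun p => rowSeg D' p 0 n) =
        (List.range' (b + 1) (n - (b + 1))).flatMap (fun p => rowSeg D p 0 n) :=
      flatMap_congr _ (fun x hx => by
        rw [List.mem_range'] at hx
        obtain ⟨t, ht, rfl⟩ := hx
        exact rowSeg_congr (fun q _ _ => hD'eq _ _ (by omega) (by omega)))
    -- the two word decompositions
    have hwD : word n D =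
        (((List.range' 0 a).flatMap fun p => rowSeg D p 0 n) ++
            rowSeg D a (d + 1) (n - (d + 1))) ++ [a + d + 1] ++
          ((rowSeg D a 0 d ++
              ((List.range' (a + 1) (b - (a + 1))).flatMap fun p => rowSeg D p 0 n)) ++
            rowSeg D b (c + 1) (n - (c + 1))) ++ [b + c + 1] ++
          (rowSeg D b 0 c ++
            ((List.range' (b + 1) (n - (b + 1))).flatMap fun p => rowSeg D p 0 n)) := by
      rw [word_eq, hrange]
      simp only [List.flatMap_append, List.range'_one, List.flatMap_cons, List.flatMap_nil,
        List.append_nil]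
      rw [hrowa, hrowb]
      simp only [List.append_assoc]
    have hwD' : word n D' =
        (((List.range' 0 a).flatMap fun p => rowSeg D p 0 n) ++
            rowSeg D a (d + 1) (n - (d + 1))) ++
          ((rowSeg D a 0 d ++
              ((List.range' (a + 1) (b - (a + 1))).flatMap fun p => rowSeg D p 0 n)) ++
            rowSeg D b (c + 1) (n - (c + 1))) ++
          (rowSeg D b 0 c ++
            ((List.range' (b + 1) (n - (b + 1))).flatMap fun p => rowSeg D p 0 n)) := by
      rw [word_eq, hrange]
      simp only [List.flatMap_append, List.range'_one, List.flatMap_cons, List.flatMap_nil,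
        List.append_nil]
      rw [hW1, hWmid, hW2, hrowa', hrowb']
      simp only [List.append_assoc]
    -- evaluations of the middle segment
    have hBisplit : rowSeg D b (c + 1) (n - (c + 1)) =
        rowSeg D b (d + 1) (n - (d + 1)) ++ dList (b + c + 2) (d - (c + 1)) := by
      have e0 : rowSeg D b (c + 1) (n - (c + 1)) =
          rowSeg D b (d + 1) (n - (d + 1)) ++ rowSeg D b d 1 ++
            rowSeg D b (c + 1) (d - (c + 1)) := by
        conv_lhs => rw [show n - (c + 1) = (d - (c + 1)) + (1 + (n - (d + 1))) from by omega]
        rw [rowSeg_split, rowSeg_split,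
          show c + 1 + (d - (c + 1)) = d from by omega]
      have e1 : rowSeg D b d 1 = [] := by
        rw [rowSeg_one, hmb]
        simp
      have e2 : rowSeg D b (c + 1) (d - (c + 1)) = dList (b + c + 2) (d - (c + 1)) := by
        rw [rowSeg_cross (fun q hq1 hq2 =>
          hcross (b + 1) (q + 1) (by omega) (by omega) (by omega) (by omega)
            (by omega) (by omega) (by omega)),
          show b + (c + 1) + 1 = b + c + 2 from by omega]
      rw [e0, e1, e2]
      simp
    have hBi1 : ps (rowSeg D b (c + 1) (n - (c + 1))) (b + c + 1) = b + c + 1 := by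
      rw [hBisplit, ps_append, Equiv.Perm.mul_apply, ps_dList_lo (by omega)]
      exact ps_fix (fun t ht => by have := mem_rowSeg ht; omega)
    have hBi2 : ps (rowSeg D b (c + 1) (n - (c + 1))) (b + c + 2) = b + d + 1 := by
      rw [hBisplit, ps_append, Equiv.Perm.mul_apply, ps_dList_bottom,
        show b + c + 2 + (d - (c + 1)) = b + d + 1 from by omega]
      exact ps_fix (fun t ht => by have := mem_rowSeg ht; omega)
    have hChsplit : rowSeg D a 0 d =
        dList (a + c + 2) (d - (c + 1)) ++ rowSeg D a 0 c := by
      have e0 : rowSeg D a 0 d =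
          rowSeg D a (c + 1) (d - (c + 1)) ++ rowSeg D a c 1 ++ rowSeg D a 0 c := by
        conv_lhs => rw [show d = c + (1 + (d - (c + 1))) from by omega]
        rw [rowSeg_split, rowSeg_split, Nat.zero_add]
      have e1 : rowSeg D a c 1 = [] := by
        rw [rowSeg_one, hhj]
        simp
      have e2 : rowSeg D a (c + 1) (d - (c + 1)) = dList (a + c + 2) (d - (c + 1)) := by
        rw [rowSeg_cross (fun q hq1 hq2 =>
          hcross (a + 1) (q + 1) (by omega) (by omega) (by omega) (by omega)
            (by omega) (by omega) (by omega)),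
          show a + (c + 1) + 1 = a + c + 2 from by omega]
      rw [e0, e1, e2]
      simp
    have hCh1 : ps (rowSeg D a 0 d) (a + c + 2) = a + d + 1 := by
      rw [hChsplit, ps_append, Equiv.Perm.mul_apply,
        ps_fix (L := rowSeg D a 0 c) (fun t ht => by have := mem_rowSeg ht; omega),
        ps_dList_bottom, show a + c + 2 + (d - (c + 1)) = a + d + 1 from by omega]
    have hCh2 : ps (rowSeg D a 0 d) (a + d + 2) = a + d + 2 := by
      rw [hChsplit, ps_append, Equiv.Perm.mul_apply,
        ps_fix (L := rowSeg D a 0 c) (fun t ht => by have := mem_rowSeg ht; omega),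
        ps_dList_hi (by omega)]
    have hmid : ∀ x, b + c + 1 ≤ x → x ≤ b + d + 1 →
        ps ((List.range' (a + 1) (b - (a + 1))).flatMap fun p => rowSeg D p 0 n) x =
          x - (b - (a + 1)) := by
      intro x hx1 hx2
      exact midEval (h := a + 1) (i := b + 1) (j := c + 1) (k := d + 1)
        (by omega) (by omega) (by omega)
        (fun p q hp1 hp2 hq1 hq2 =>
          hcross p q (by omega) (by omega) (by omega) (by omega)
            (by omega) (by omega) (by omega))
        (b - (a + 1)) (a + 1) x (by omega) (by omega) (by omega) (by omega)
    -- the conjugation identity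
    have hQ1 : ps ((rowSeg D a 0 d ++
          ((List.range' (a + 1) (b - (a + 1))).flatMap fun p => rowSeg D p 0 n)) ++
          rowSeg D b (c + 1) (n - (c + 1))) (b + c + 1) = a + d + 1 := by
      rw [ps_append, ps_append, Equiv.Perm.mul_apply, Equiv.Perm.mul_apply,
        hBi1, hmid _ (by omega) (by omega),
        show b + c + 1 - (b - (a + 1)) = a + c + 2 from by omega, hCh1]
    have hQ2 : ps ((rowSeg D a 0 d ++
          ((List.range' (a + 1) (b - (a + 1))).flatMap fun p => rowSeg D p 0 n)) ++
          rowSeg D b (c + 1) (n - (c + 1))) (b + c + 2) = a + d + 2 := by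
      rw [ps_append, ps_append, Equiv.Perm.mul_apply, Equiv.Perm.mul_apply,
        hBi2, hmid _ (by omega) (by omega),
        show b + d + 1 - (b - (a + 1)) = a + d + 2 from by omega, hCh2]
    have hkey : sw (a + d + 1) * (ps ((rowSeg D a 0 d ++
          ((List.range' (a + 1) (b - (a + 1))).flatMap fun p => rowSeg D p 0 n)) ++
          rowSeg D b (c + 1) (n - (c + 1))) * sw (b + c + 1)) =
        ps ((rowSeg D a 0 d ++
          ((List.range' (a + 1) (b - (a + 1))).flatMap fun p => rowSeg D p 0 n)) ++
          rowSeg D b (c + 1) (n - (c + 1))) := by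
      set Q := ps ((rowSeg D a 0 d ++
          ((List.range' (a + 1) (b - (a + 1))).flatMap fun p => rowSeg D p 0 n)) ++
          rowSeg D b (c + 1) (n - (c + 1))) with hQdef
      have hconj : Equiv.swap (Q (b + c + 1)) (Q (b + c + 2)) =
          Q * Equiv.swap (b + c + 1) (b + c + 2) * Q⁻¹ :=
        Equiv.swap_apply_apply Q _ _
      rw [hQ1, hQ2] at hconj
      rw [sw, sw, show a + d + 1 + 1 = a + d + 2 from rfl,
        show b + c + 1 + 1 = b + c + 2 from rfl, hconj]
      simp [mul_assoc, Equiv.swap_mul_self]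
    -- same permutation, two fewer crosses
    have hps : ∀ E : PipeDream, perm n E = ps (word n E) := fun E => rfl
    have hpermeq : ps (word n D) = ps (word n D') := by
      rw [hwD, hwD']
      exact ps_middle_cancel hkey
    have hlen : (word n D).length = (word n D').length + 2 := by
      rw [hwD, hwD']
      simp only [List.length_append, List.length_cons, List.length_nil]
      omega
    have hinv : invCount w n ≤ (word n D').length := by
      have hw' : w = ps (word n D') := by
        rw [← hperm, hps D, hpermeq]
      rw [hw']
      exact invCount_ps_le _ n
    have hcc : crossCount n D = (word n D).length := rfl
    omega
end

section
/- Let D be a reduced pipe dream with a movable cross tile (i,j). Then (i,j) is ladder movable in D if and only if h_{ij}(D) = max_bump_row_{ij}(D) and k_{ij}(D) = min_bump_col_{ij}(D). -/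
open Finset

namespace Stmt2Aux
open PipeDream

/-- product of adjacent transpositions of a list of letters -/
def lprod (L : List ℕ) : Equiv.Perm ℕ := (L.map (fun k => Equiv.swap k (k+1))).prod

lemma lprod_nil : lprod [] = 1 := rfl

lemma lprod_append (L1 L2 : List ℕ) : lprod (L1 ++ L2) = lprod L1 * lprod L2 := by
  unfold lprod; rw [List.map_append, List.prod_append]

lemma lprod_singleton (a : ℕ) : lprod [a] = Equiv.swap a (a+1) := by
  unfold lprod; simp

lemma lprod_cons (a : ℕ) (L : List ℕ) : lprod (a :: L) = Equiv.swap a (a+1) * lprod L := by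
  unfold lprod; simp

/-- one step of the inversion-count bound -/
lemma inv_step (n a : ℕ) (w : Equiv.Perm ℕ) :
    invCount (Equiv.swap a (a+1) * w) n ≤ invCount w n + 1 := by
  classical
  unfold invCount
  set T := (Finset.Icc 1 n) ×ˢ (Finset.Icc 1 n) with hT
  set p0 : ℕ × ℕ := (w⁻¹ a, w⁻¹ (a+1)) with hp0
  have hsub : T.filter (fun p => p.1 < p.2 ∧ (Equiv.swap a (a+1) * w) p.2 < (Equiv.swap a (a+1) * w) p.1)
      ⊆ insert p0 (T.filter (fun p => p.1 < p.2 ∧ w p.2 < w p.1)) := by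
    intro x hx
    rw [Finset.mem_filter] at hx
    obtain ⟨hxT, hlt, hswap⟩ := hx
    by_cases hw : w x.2 < w x.1
    · exact Finset.mem_insert_of_mem (Finset.mem_filter.mpr ⟨hxT, hlt, hw⟩)
    · -- the inversion was created by the swap
      have hne : w x.1 ≠ w x.2 := fun he => absurd (w.injective he) (by omega)
      have hwlt : w x.1 < w x.2 := by omega
      simp only [Equiv.Perm.mul_apply] at hswap
      have h1 : Equiv.swap a (a+1) (w x.1) =
          if w x.1 = a then a+1 else if w x.1 = a+1 then a else w x.1 := Equiv.swap_apply_def a (a+1) (w x.1)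
      have h2 : Equiv.swap a (a+1) (w x.2) =
          if w x.2 = a then a+1 else if w x.2 = a+1 then a else w x.2 := Equiv.swap_apply_def a (a+1) (w x.2)
      rw [h1, h2] at hswap
      have hkey : w x.1 = a ∧ w x.2 = a + 1 := by
        split_ifs at hswap <;> omega
      have e1 : x.1 = w⁻¹ a := by
        have := hkey.1; rw [← this]; exact (Equiv.symm_apply_apply w x.1).symm
      have e2 : x.2 = w⁻¹ (a+1) := by
        have := hkey.2; rw [← this]; exact (Equiv.symm_apply_apply w x.2).symm
      have hx : x = p0 := Prod.ext e1 e2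
      rw [hx]
      exact Finset.mem_insert_self _ _
  calc (T.filter _).card ≤ (insert p0 (T.filter (fun p => p.1 < p.2 ∧ w p.2 < w p.1))).card :=
        Finset.card_le_card hsub
    _ ≤ _ + 1 := Finset.card_insert_le _ _

lemma invCount_one (n : ℕ) : invCount (1 : Equiv.Perm ℕ) n = 0 := by
  unfold invCount
  rw [Finset.card_eq_zero]
  apply Finset.filter_false_of_mem
  intro p _
  simp only [Equiv.Perm.one_apply]
  omega

lemma inv_le_len (n : ℕ) (L : List ℕ) : invCount (lprod L) n ≤ L.length := by
  induction L with
  | nil => rw [lprod_nil, invCount_one]; simp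
  | cons a L ih =>
      rw [lprod_cons]
      calc invCount (Equiv.swap a (a+1) * lprod L) n ≤ invCount (lprod L) n + 1 := inv_step n a _
        _ ≤ L.length + 1 := by omega
        _ = (a :: L).length := by simp

/-- letters of row `r` (1-indexed), columns `a, a+1, …, a+len-1`, listed right-to-left -/
def seg (D : PipeDream) (r a len : ℕ) : List ℕ :=
  (List.range' a len).reverse.filterMap
    (fun c => if D (r, c) = true then some (r + c - 1) else none)

lemma seg_zero (D : PipeDream) (r a : ℕ) : seg D r a 0 = [] := rfl

lemma seg_split (D : PipeDream) (r a l₁ l₂ : ℕ) :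
    seg D r a (l₁ + l₂) = seg D r (a + l₁) l₂ ++ seg D r a l₁ := by
  unfold seg
  rw [← List.range'_append (s := a) (m := l₁) (n := l₂) (step := 1), List.reverse_append,
    List.filterMap_append, one_mul]

lemma seg_one (D : PipeDream) (r c : ℕ) :
    seg D r c 1 = if D (r, c) = true then [r + c - 1] else [] := by
  unfold seg
  rw [List.range'_one]
  simp only [List.reverse_singleton, List.filterMap]
  split <;> simp_all [List.filterMap]

lemma lprod_seg_fix (D : PipeDream) (r a len v : ℕ) (ha : 1 ≤ a)
    (hv : ∀ c, a ≤ c → c < a + len → D (r, c) = true → v ≠ r + c - 1 ∧ v ≠ r + c) :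
    (lprod (seg D r a len)) v = v := by
  induction len with
  | zero => rw [seg_zero]; rfl
  | succ len ih =>
      rw [show len + 1 = len + 1 from rfl, seg_split D r a len 1, lprod_append,
        Equiv.Perm.mul_apply]
      rw [ih (fun c h1 h2 h3 => hv c h1 (by omega) h3)]
      rw [seg_one]
      by_cases hd : D (r, a + len) = true
      · rw [if_pos hd, lprod_singleton]
        have h1 := hv (a + len) (by omega) (by omega) hd
        apply Equiv.swap_apply_of_ne_of_ne h1.1
        intro he
        exact h1.2 (by omega)
      · rw [if_neg hd]; rfl

lemma lprod_seg_down (D : PipeDream) (r a len c₀ : ℕ) (ha : 1 ≤ a)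
    (h1 : a ≤ c₀) (h2 : c₀ < a + len) (hc : D (r, c₀) = true) :
    (lprod (seg D r a len)) (r + c₀) = r + c₀ - 1 := by
  induction len with
  | zero => omega
  | succ len ih =>
      rcases Nat.lt_or_ge c₀ (a + len) with hlt | hge
      · rw [seg_split D r a len 1, lprod_append, Equiv.Perm.mul_apply, ih hlt, seg_one]
        by_cases hd : D (r, a + len) = true
        · rw [if_pos hd, lprod_singleton]
          apply Equiv.swap_apply_of_ne_of_ne <;> omega
        · rw [if_neg hd]; rfl
      · have he : a + len = c₀ := by omega
        subst he
        rw [seg_split D r a len 1, lprod_append, Equiv.Perm.mul_apply]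
        rw [lprod_seg_fix D r a len (r + (a + len)) ha (by intro c hc1 hc2 _; omega)]
        rw [seg_one, if_pos hc, lprod_singleton]
        rw [show r + (a + len) - 1 + 1 = r + (a + len) from by omega]
        exact Equiv.swap_apply_right _ _

lemma lprod_seg_push (D : PipeDream) (r a len : ℕ) (ha : 1 ≤ a)
    (hc : ∀ c, a ≤ c → c < a + len → D (r, c) = true) :
    (lprod (seg D r a len)) (r + a - 1) = r + (a + len) - 1 := by
  induction len with
  | zero => rw [seg_zero]; rfl
  | succ len ih =>
      rw [seg_split D r a len 1, lprod_append, Equiv.Perm.mul_apply]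
      rw [ih (fun c u1 u2 => hc c u1 (by omega))]
      rw [seg_one, if_pos (hc (a + len) (by omega) (by omega)), lprod_singleton]
      have e : r + (a + len) - 1 + 1 = r + (a + (len + 1)) - 1 := by omega
      rw [← e] at *
      exact Equiv.swap_apply_left _ _

/-- rows `r, r+1, …, r+cnt-1` of the word -/
def rows (D : PipeDream) (n r cnt : ℕ) : List ℕ :=
  (List.range' r cnt).flatMap (fun p => seg D p 1 n)

lemma rows_zero (D : PipeDream) (n r : ℕ) : rows D n r 0 = [] := rfl

lemma rows_split (D : PipeDream) (n r c₁ c₂ : ℕ) :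
    rows D n r (c₁ + c₂) = rows D n r c₁ ++ rows D n (r + c₁) c₂ := by
  unfold rows
  rw [← List.range'_append (s := r) (m := c₁) (n := c₂) (step := 1), List.flatMap_append, one_mul]

lemma rows_one (D : PipeDream) (n r : ℕ) : rows D n r 1 = seg D r 1 n := by
  unfold rows
  rw [List.range'_one]
  simp

lemma lprod_rows_down (D : PipeDream) (n r cnt c : ℕ) (hr : 1 ≤ r) (hc1 : 1 ≤ c) (hcn : c ≤ n)
    (hcr : ∀ p, r ≤ p → p < r + cnt → D (p, c) = true) :
    (lprod (rows D n r cnt)) (r + cnt - 1 + c) = r - 1 + c := by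
  induction cnt generalizing r with
  | zero => rw [rows_zero]; rfl
  | succ cnt ih =>
      have e1 : rows D n r (cnt + 1) = rows D n r 1 ++ rows D n (r + 1) cnt := by
        rw [← rows_split D n r 1 cnt, Nat.add_comm 1 cnt]
      rw [e1, rows_one, lprod_append, Equiv.Perm.mul_apply]
      have e2 : r + (cnt + 1) - 1 + c = (r + 1) + cnt - 1 + c := by omega
      rw [e2, ih (r + 1) (by omega) (fun p u1 u2 => hcr p (by omega) (by omega))]
      have e3 : r + 1 - 1 + c = r + c := by omega
      rw [e3]
      have := lprod_seg_down D r 1 n c (le_refl 1) hc1 (by omega)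
        (hcr r (le_refl r) (by omega))
      rw [this]
      omega

lemma word_eq_rows (D : PipeDream) (n : ℕ) : word n D = rows D n 1 n := by
  unfold word rows
  rw [List.range'_eq_map_range, List.flatMap_map]
  apply List.flatMap_congr
  intro t _
  show _ = seg D (1 + t) 1 n
  unfold seg
  rw [List.range'_eq_map_range, ← List.map_reverse, List.filterMap_map]
  apply List.filterMap_congr
  intro c _
  show (if D (t + 1, c + 1) = true then some (t + c + 1) else none)
      = if D (1 + t, 1 + c) = true then some (1 + t + (1 + c) - 1) else none
  rw [Nat.add_comm 1 t, Nat.add_comm 1 c,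
    show t + 1 + (c + 1) - 1 = t + c + 1 by omega]


lemma no_cross_at_corner (n : ℕ) (w : Equiv.Perm ℕ) (D : PipeDream)
    (hperm : perm n D = w) (hcount : crossCount n D = invCount w n)
    (h i j k : ℕ)
    (hh1 : 1 ≤ h) (hhi : h < i) (hj1 : 1 ≤ j) (hjk : j + 1 ≤ k) (hkn : k ≤ n) (hin : i ≤ n)
    (hbh : D (h, j) = false) (hbk : D (i, k) = false) (hcij : D (i, j) = true)
    (hrowi : ∀ c, j < c → c < k → D (i, c) = true)
    (hrowh : ∀ c, j < c → c < k → D (h, c) = true)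
    (hcolj : ∀ p, h < p → p < i → D (p, j) = true)
    (hcolk : ∀ p, h < p → p < i → D (p, k) = true)
    (hk' : D (h, k) = true) : False := by
  classical
  -- row decompositions
  have Erowh : seg D h 1 n = seg D h (k+1) (n-k) ++ ([h + k - 1] ++ seg D h 1 (k-1)) := by
    have e1 := seg_split D h 1 (k-1) (n-k+1)
    rw [show (k-1) + (n-k+1) = n from by omega, show 1 + (k-1) = k from by omega] at e1
    have e2 := seg_split D h k 1 (n-k)
    rw [show 1 + (n-k) = n-k+1 from by omega] at e2
    rw [e1, e2, seg_one, if_pos hk', List.append_assoc]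
  have Erowi : seg D i 1 n = seg D i (j+1) (n-j) ++ ([i + j - 1] ++ seg D i 1 (j-1)) := by
    have e1 := seg_split D i 1 (j-1) (n-j+1)
    rw [show (j-1) + (n-j+1) = n from by omega, show 1 + (j-1) = j from by omega] at e1
    have e2 := seg_split D i j 1 (n-j)
    rw [show 1 + (n-j) = n-j+1 from by omega] at e2
    rw [e1, e2, seg_one, if_pos hcij, List.append_assoc]
  have Erows : rows D n 1 n = rows D n 1 (h-1) ++ (seg D h 1 n ++
      (rows D n (h+1) (i-h-1) ++ (seg D i 1 n ++ rows D n (i+1) (n-i)))) := by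
    have s1 := rows_split D n 1 (h-1) (n-h+1)
    rw [show (h-1)+(n-h+1) = n from by omega, show 1+(h-1) = h from by omega] at s1
    have s2 := rows_split D n h 1 (n-h)
    rw [show 1+(n-h) = n-h+1 from by omega] at s2
    have s3 := rows_split D n (h+1) (i-h-1) (n-i+1)
    rw [show (i-h-1)+(n-i+1) = n-h from by omega, show h+1+(i-h-1) = i from by omega] at s3
    have s4 := rows_split D n i 1 (n-i)
    rw [show 1+(n-i) = n-i+1 from by omega] at s4
    rw [s1, s2, s3, s4, rows_one, rows_one]
  have EW : word n D = (rows D n 1 (h-1) ++ seg D h (k+1) (n-k)) ++ ([h + k - 1] ++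
      ((seg D h 1 (k-1) ++ (rows D n (h+1) (i-h-1) ++ seg D i (j+1) (n-j))) ++
        ([i + j - 1] ++ (seg D i 1 (j-1) ++ rows D n (i+1) (n-i))))) := by
    rw [word_eq_rows, Erows, Erowh, Erowi]
    simp [List.append_assoc]
  set B : List ℕ := seg D h 1 (k-1) ++ (rows D n (h+1) (i-h-1) ++ seg D i (j+1) (n-j)) with hB
  -- the conjugating product sends i+j-1 ↦ h+k-1 and i+j ↦ h+k
  have hBp1 : (lprod B) (i+j-1) = h+k-1 := by
    have t1 : (lprod (seg D i (j+1) (n-j))) (i+j-1) = i+j-1 := by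
      apply lprod_seg_fix D i (j+1) (n-j) _ (by omega)
      intro c hc1 hc2 _
      constructor <;> omega
    have t2 : (lprod (rows D n (h+1) (i-h-1))) (i+j-1) = h+j := by
      have t := lprod_rows_down D n (h+1) (i-h-1) j (by omega) hj1 (by omega)
        (fun p u1 u2 => hcolj p (by omega) (by omega))
      rw [show (h+1) + (i-h-1) - 1 + j = i+j-1 from by omega,
        show h+1-1+j = h+j from by omega] at t
      exact t
    have t3 : (lprod (seg D h 1 (k-1))) (h+j) = h+k-1 := by
      have esplit := seg_split D h 1 j (k-1-j)
      rw [show j + (k-1-j) = k-1 from by omega, show 1 + j = j+1 from by omega] at esplit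
      rw [esplit, lprod_append, Equiv.Perm.mul_apply]
      have u1 : (lprod (seg D h 1 j)) (h+j) = h+j := by
        apply lprod_seg_fix D h 1 j _ le_rfl
        intro c hc1 hc2 hcd
        rcases Nat.lt_or_ge c j with hcj | hcj
        · constructor <;> omega
        · have hcj' : c = j := by omega
          rw [hcj', hbh] at hcd
          exact absurd hcd (by simp)
      rw [u1]
      have u2 := lprod_seg_push D h (j+1) (k-1-j) (by omega)
        (fun c w1 w2 => hrowh c (by omega) (by omega))
      rw [show h + (j+1) - 1 = h+j from by omega,
        show h + ((j+1) + (k-1-j)) - 1 = h+k-1 from by omega] at u2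
      exact u2
    rw [hB, lprod_append, lprod_append, Equiv.Perm.mul_apply, Equiv.Perm.mul_apply, t1, t2, t3]
  have hBp2 : (lprod B) (i+j) = h+k := by
    have t1 : (lprod (seg D i (j+1) (n-j))) (i+j) = i+k-1 := by
      have esplit := seg_split D i (j+1) (k-1-j) (n-k+1)
      rw [show (k-1-j) + (n-k+1) = n-j from by omega,
        show (j+1) + (k-1-j) = k from by omega] at esplit
      rw [esplit, lprod_append, Equiv.Perm.mul_apply]
      have u1 := lprod_seg_push D i (j+1) (k-1-j) (by omega)
        (fun c w1 w2 => hrowi c (by omega) (by omega))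
      rw [show i + (j+1) - 1 = i+j from by omega,
        show i + ((j+1) + (k-1-j)) - 1 = i+k-1 from by omega] at u1
      rw [u1]
      apply lprod_seg_fix D i k (n-k+1) _ (by omega)
      intro c hc1 hc2 hcd
      rcases Nat.lt_or_ge k c with hck | hck
      · constructor <;> omega
      · have hck' : c = k := by omega
        rw [hck', hbk] at hcd
        exact absurd hcd (by simp)
    have t2 : (lprod (rows D n (h+1) (i-h-1))) (i+k-1) = h+k := by
      have t := lprod_rows_down D n (h+1) (i-h-1) k (by omega) (by omega) hkn
        (fun p u1 u2 => hcolk p (by omega) (by omega))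
      rw [show (h+1) + (i-h-1) - 1 + k = i+k-1 from by omega,
        show h+1-1+k = h+k from by omega] at t
      exact t
    have t3 : (lprod (seg D h 1 (k-1))) (h+k) = h+k := by
      apply lprod_seg_fix D h 1 (k-1) _ le_rfl
      intro c hc1 hc2 _
      constructor <;> omega
    rw [hB, lprod_append, lprod_append, Equiv.Perm.mul_apply, Equiv.Perm.mul_apply, t1, t2, t3]
  have hswap : Equiv.swap (h+k-1) (h+k-1+1) * lprod B * Equiv.swap (i+j-1) (i+j-1+1)
      = lprod B := by
    have e := Equiv.swap_apply_apply (lprod B) (i+j-1) (i+j)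
    rw [hBp1, hBp2] at e
    rw [show h+k-1+1 = h+k from by omega, show i+j-1+1 = i+j from by omega, e]
    have egr : (lprod B * Equiv.swap (i+j-1) (i+j) * (lprod B)⁻¹) * lprod B *
        Equiv.swap (i+j-1) (i+j)
        = lprod B * (Equiv.swap (i+j-1) (i+j) * Equiv.swap (i+j-1) (i+j)) := by
      group
    rw [egr, Equiv.swap_mul_self, mul_one]
  have EWp : w = lprod ((rows D n 1 (h-1) ++ seg D h (k+1) (n-k)) ++
      (B ++ (seg D i 1 (j-1) ++ rows D n (i+1) (n-i)))) := by
    rw [← hperm]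
    show lprod (word n D) = _
    rw [EW]
    simp only [lprod_append, lprod_singleton]
    congr 1
    have egr : Equiv.swap (h+k-1) (h+k-1+1) * (lprod B * (Equiv.swap (i+j-1) (i+j-1+1) *
        (lprod (seg D i 1 (j-1)) * lprod (rows D n (i+1) (n-i)))))
        = (Equiv.swap (h+k-1) (h+k-1+1) * lprod B * Equiv.swap (i+j-1) (i+j-1+1)) *
          (lprod (seg D i 1 (j-1)) * lprod (rows D n (i+1) (n-i))) := by
      group
    rw [egr, hswap]
  have hlen : (word n D).length = ((rows D n 1 (h-1) ++ seg D h (k+1) (n-k)) ++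
      (B ++ (seg D i 1 (j-1) ++ rows D n (i+1) (n-i)))).length + 2 := by
    rw [EW, hB]
    simp only [List.length_append, List.length_cons, List.length_nil]
    omega
  have hb := inv_le_len n ((rows D n 1 (h-1) ++ seg D h (k+1) (n-k)) ++
      (B ++ (seg D i 1 (j-1) ++ rows D n (i+1) (n-i))))
  rw [← EWp] at hb
  have hc2 : (word n D).length = invCount w n := hcount
  omega

end Stmt2Aux

open PipeDream in
/-- a movable cross tile (i,j) is ladder movable iff
h_{ij}(D) = max_bump_row_{ij}(D) and k_{ij}(D) = min_bump_col_{ij}(D). -/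
theorem stmt2 (n : ℕ) (w : Equiv.Perm ℕ) (D : PipeDream) (hD : D ∈ RPD n w)
    (i j : ℕ) (hmov : Movable D i j) :
    LadderMovable n D i j ↔
      (hIdx D i j = maxBumpRow n D i j ∧ kIdx n D i j = minBumpCol n D i j) := by
  classical
  obtain ⟨hstair, hperm, hcount⟩ := hD
  obtain ⟨hcij, h₀, hh₀1, hh₀i, hb₀⟩ := hmov
  obtain ⟨hi1, hj1, hijn⟩ := hstair i j hcij
  have hin : i ≤ n := by omega
  -- facts about hIdx
  have hHne : ((Finset.Ico 1 i).filter (fun p => D (p, j) = false)).Nonempty :=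
    ⟨h₀, Finset.mem_filter.mpr ⟨Finset.mem_Ico.mpr ⟨hh₀1, hh₀i⟩, hb₀⟩⟩
  obtain ⟨hb, hbmem, hbsup⟩ := Finset.exists_mem_eq_sup _ hHne id
  have hHdef : hIdx D i j = hb := hbsup
  rw [Finset.mem_filter, Finset.mem_Ico] at hbmem
  have Hh1 : 1 ≤ hIdx D i j := by rw [hHdef]; exact hbmem.1.1
  have Hhi : hIdx D i j < i := by rw [hHdef]; exact hbmem.1.2
  have Hbh : D (hIdx D i j, j) = false := by rw [hHdef]; exact hbmem.2
  -- facts about kIdx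
  have hKne : ((Finset.Icc (j+1) n).filter (fun q => D (i, q) = false)).Nonempty := by
    refine ⟨n + 2 - i, Finset.mem_filter.mpr ⟨Finset.mem_Icc.mpr ⟨by omega, by omega⟩, ?_⟩⟩
    cases hB : D (i, n + 2 - i) with
    | false => rfl
    | true => obtain ⟨-, -, u⟩ := hstair _ _ hB; omega
  obtain ⟨kk, hkkmin⟩ := Finset.min_of_nonempty hKne
  have hKdef : kIdx n D i j = kk := by
    show WithTop.untopD 0 _ = kk
    rw [hkkmin]
    exact WithTop.untopD_coe _ _
  have hkkmem := Finset.mem_of_min hkkmin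
  rw [Finset.mem_filter, Finset.mem_Icc] at hkkmem
  have Kj : j + 1 ≤ kIdx n D i j := by rw [hKdef]; exact hkkmem.1.1
  have Kn : kIdx n D i j ≤ n := by rw [hKdef]; exact hkkmem.1.2
  have Kb : D (i, kIdx n D i j) = false := by rw [hKdef]; exact hkkmem.2
  have Kmin : ∀ q, j + 1 ≤ q → q ≤ n → D (i, q) = false → kIdx n D i j ≤ q := by
    intro q u1 u2 u3
    have hmem : q ∈ (Finset.Icc (j+1) n).filter (fun q => D (i, q) = false) :=
      Finset.mem_filter.mpr ⟨Finset.mem_Icc.mpr ⟨u1, u2⟩, u3⟩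
    have hq := Finset.min_le hmem
    rw [hkkmin] at hq
    have hq' : kk ≤ q := by exact_mod_cast hq
    omega
  have Krow : ∀ q, j < q → q < kIdx n D i j → D (i, q) = true := by
    intro q u1 u2
    cases hB : D (i, q) with
    | true => rfl
    | false => have := Kmin q (by omega) (by omega) hB; omega
  constructor
  · rintro ⟨-, hiff⟩
    constructor
    · apply le_antisymm
      · exact Finset.le_sup (f := id) (Finset.mem_filter.mpr
          ⟨Finset.mem_Ico.mpr ⟨le_refl _, Hhi⟩,
            ⟨j, Finset.mem_Icc.mpr ⟨le_refl _, by omega⟩, Hbh⟩⟩)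
      · apply Finset.sup_le
        intro p hp
        rw [Finset.mem_filter, Finset.mem_Ico] at hp
        obtain ⟨⟨hp1, hp2⟩, q, hq, hbq⟩ := hp
        rw [Finset.mem_Icc] at hq
        have hrect : (p, q) ∈ Rect n D i j := by
          simp only [Rect, Finset.mem_Icc, Prod.mk_le_mk]
          exact ⟨⟨hp1, hq.1⟩, ⟨by omega, hq.2⟩⟩
        rcases (hiff p q hrect).mp hbq with hc | hc | hc <;>
          (rw [Prod.mk.injEq] at hc; simp only [id_eq]; omega)
    · have hFmin : (((Finset.Icc (j + 1) (kIdx n D i j)).filter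
          (fun q => ∃ p ∈ Finset.Icc (hIdx D i j) i, D (p, q) = false))).min
          = WithTop.some (kIdx n D i j) := by
        apply le_antisymm
        · apply Finset.min_le
          exact Finset.mem_filter.mpr ⟨Finset.mem_Icc.mpr ⟨Kj, le_refl _⟩,
            ⟨i, Finset.mem_Icc.mpr ⟨by omega, le_refl _⟩, Kb⟩⟩
        · apply Finset.le_min
          intro q hq
          rw [Finset.mem_filter, Finset.mem_Icc] at hq
          obtain ⟨⟨hq1, hq2⟩, p, hp, hbq⟩ := hq
          rw [Finset.mem_Icc] at hp
          have hrect : (p, q) ∈ Rect n D i j := by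
            simp only [Rect, Finset.mem_Icc, Prod.mk_le_mk]
            exact ⟨⟨hp.1, by omega⟩, ⟨hp.2, hq2⟩⟩
          have hle : kIdx n D i j ≤ q := by
            rcases (hiff p q hrect).mp hbq with hc | hc | hc <;>
              (rw [Prod.mk.injEq] at hc; omega)
          exact_mod_cast hle
      have : minBumpCol n D i j = kIdx n D i j := by
        show WithTop.untopD 0 _ = _
        rw [hFmin]
        rfl
      exact this.symm
  · rintro ⟨hmaxeq, hmineq⟩
    have NR : ∀ p, hIdx D i j < p → p < i → ∀ q, j ≤ q → q ≤ kIdx n D i j →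
        D (p, q) = true := by
      intro p u1 u2 q v1 v2
      cases hB : D (p, q) with
      | true => rfl
      | false =>
          have hpmem : p ∈ (Finset.Ico (hIdx D i j) i).filter
              (fun p => ∃ q ∈ Finset.Icc j (kIdx n D i j), D (p, q) = false) :=
            Finset.mem_filter.mpr ⟨Finset.mem_Ico.mpr ⟨by omega, u2⟩,
              ⟨q, Finset.mem_Icc.mpr ⟨v1, v2⟩, hB⟩⟩
          have h2 : p ≤ maxBumpRow n D i j := Finset.le_sup (f := id) hpmem
          omega
    have NC : ∀ q, j < q → q < kIdx n D i j → ∀ p, hIdx D i j ≤ p → p ≤ i →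
        D (p, q) = true := by
      intro q u1 u2 p v1 v2
      cases hB : D (p, q) with
      | true => rfl
      | false =>
          have hqmem : q ∈ (Finset.Icc (j + 1) (kIdx n D i j)).filter
              (fun q => ∃ p ∈ Finset.Icc (hIdx D i j) i, D (p, q) = false) :=
            Finset.mem_filter.mpr ⟨Finset.mem_Icc.mpr ⟨by omega, by omega⟩,
              ⟨p, Finset.mem_Icc.mpr ⟨v1, v2⟩, hB⟩⟩
          obtain ⟨m, hm⟩ := Finset.min_of_nonempty ⟨q, hqmem⟩
          have hmq0 := Finset.min_le hqmem
          rw [hm] at hmq0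
          have hmq : m ≤ q := by exact_mod_cast hmq0
          have hmc : minBumpCol n D i j = m := by
            show WithTop.untopD 0 _ = m
            rw [hm]
            exact WithTop.untopD_coe _ _
          omega
    have HK : D (hIdx D i j, kIdx n D i j) = false := by
      cases hB : D (hIdx D i j, kIdx n D i j) with
      | false => rfl
      | true =>
          exact (Stmt2Aux.no_cross_at_corner n w D hperm hcount (hIdx D i j) i j
            (kIdx n D i j) Hh1 Hhi hj1 Kj Kn hin Hbh Kb hcij
            Krow
            (fun c u1 u2 => NC c u1 u2 _ le_rfl (by omega))
            (fun p u1 u2 => NR p u1 u2 j le_rfl (by omega))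
            (fun p u1 u2 => NR p u1 u2 _ (by omega) le_rfl)
            hB).elim
    refine ⟨⟨hcij, h₀, hh₀1, hh₀i, hb₀⟩, ?_⟩
    intro p q hrect
    have hm : (hIdx D i j ≤ p ∧ j ≤ q) ∧ p ≤ i ∧ q ≤ kIdx n D i j := by
      simpa only [Rect, Finset.mem_Icc, Prod.mk_le_mk] using hrect
    obtain ⟨⟨hp1, hq1⟩, hp2, hq2⟩ := hm
    constructor
    · intro hbpq
      rcases Nat.lt_or_ge (hIdx D i j) p with hcase | hcase
      · rcases Nat.lt_or_ge p i with hcase2 | hcase2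
        · exact absurd (NR p hcase hcase2 q hq1 hq2) (by simp [hbpq])
        · have hpi : p = i := by omega
          rcases Nat.lt_or_ge j q with hq | hq
          · rcases Nat.lt_or_ge q (kIdx n D i j) with hq' | hq'
            · have hbpq' : D (i, q) = false := by rw [← hpi]; exact hbpq
              exact absurd (Krow q hq hq') (by simp [hbpq'])
            · exact Or.inr (Or.inr (by rw [Prod.mk.injEq]; omega))
          · have hqj : q = j := by omega
            have hbpq' : D (i, j) = false := by rw [← hpi, ← hqj]; exact hbpq
            exact absurd hcij (by simp [hbpq'])
      · rcases Nat.lt_or_ge j q with hq | hq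
        · rcases Nat.lt_or_ge q (kIdx n D i j) with hq' | hq'
          · exact absurd (NC q hq hq' p hp1 hp2) (by simp [hbpq])
          · exact Or.inr (Or.inl (by rw [Prod.mk.injEq]; omega))
        · exact Or.inl (by rw [Prod.mk.injEq]; omega)
    · rintro (hc | hc | hc) <;>
        (rw [Prod.mk.injEq] at hc; obtain ⟨e1, e2⟩ := hc; rw [e1, e2])
      · exact Hbh
      · exact HK
      · exact Kb
end

section
/- Let D be a reduced pipe dream with a movable cross tile (i,j), and let Path_{ij}(D) be the associated lattice path from (i, k_{ij}(D)) to (h_{ij}(D), j). If (p,q) is a corner of Path_{ij}(D) (i.e. either both (p-1,q) and (p,q+1) lie on the path, or both (p,q-1) and (p+1,q) lie on the path), then D(p,q) is a bump tile. -/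
open Finset

namespace PDAux

/-! ### Permutation words toolkit -/

noncomputable abbrev sw (k : ℕ) : Equiv.Perm ℕ := Equiv.swap k (k + 1)

noncomputable def pl (l : List ℕ) : Equiv.Perm ℕ :=
  (l.map fun k => Equiv.swap k (k + 1)).prod

@[simp] lemma pl_nil : pl [] = 1 := rfl

lemma pl_cons (x : ℕ) (l : List ℕ) : pl (x :: l) = sw x * pl l := by
  simp [pl, sw]

lemma pl_append (a b : List ℕ) : pl (a ++ b) = pl a * pl b := by
  simp [pl]

lemma pl_singleton (x : ℕ) : pl [x] = sw x := by simp [pl, sw]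

lemma sw_fix {k v : ℕ} (h1 : v ≠ k) (h2 : v ≠ k + 1) : sw k v = v :=
  Equiv.swap_apply_of_ne_of_ne h1 h2

lemma sw_lt {k x y : ℕ} (hxy : x < y) (hne : ¬(x = k ∧ y = k + 1)) :
    sw k x < sw k y := by
  simp only [sw, Equiv.swap_apply_def]
  split_ifs <;> omega

lemma pl_fix {l : List ℕ} {v : ℕ} (h : ∀ x ∈ l, v ≠ x ∧ v ≠ x + 1) :
    pl l v = v := by
  induction l with
  | nil => rfl
  | cons a l ih =>
      rw [pl_cons, Equiv.Perm.mul_apply, ih (fun x hx => h x (List.mem_cons_of_mem a hx))]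
      exact sw_fix (h a List.mem_cons_self).1 (h a List.mem_cons_self).2

/-! ### Row segments of the word -/

/-- Letters of row `r` for columns in `(a, b]`, read right-to-left
(matching the reading order of `word`). -/
def rowSeg (D : PipeDream) (r a b : ℕ) : List ℕ :=
  ((List.range' (a + 1) (b - a)).reverse).filterMap
    (fun t => if D (r, t) = true then some (r + t - 1) else none)

@[simp] lemma rowSeg_self (D : PipeDream) (r a : ℕ) : rowSeg D r a a = [] := by
  simp [rowSeg]

lemma rowSeg_split (D : PipeDream) (r : ℕ) {a m b : ℕ} (h1 : a ≤ m) (h2 : m ≤ b) :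
    rowSeg D r a b = rowSeg D r m b ++ rowSeg D r a m := by
  have key : List.range' (a+1) (m-a) ++ List.range' (m+1) (b-m) = List.range' (a+1) (b-a) := by
    have h3 : m + 1 = (a+1) + 1 * (m-a) := by omega
    rw [h3, List.range'_append]
    congr 1
    omega
  unfold rowSeg
  rw [← key, List.reverse_append, List.filterMap_append]

lemma rowSeg_single (D : PipeDream) (r a : ℕ) :
    rowSeg D r a (a + 1) = if D (r, a + 1) = true then [r + a] else [] := by
  have : a + 1 - a = 1 := by omega
  simp only [rowSeg, this, List.range'_one, List.reverse_singleton]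
  rcases h : D (r, a + 1) <;> simp [h]

lemma mem_rowSeg {D : PipeDream} {r a b x : ℕ} (hx : x ∈ rowSeg D r a b) :
    r + a ≤ x ∧ x + 1 ≤ r + b := by
  simp only [rowSeg, List.mem_filterMap, List.mem_reverse, List.mem_range'] at hx
  obtain ⟨t, ⟨i, hi, rfl⟩, ht⟩ := hx
  split_ifs at ht with hD
  simp only [Option.some_inj] at ht
  omega

lemma pl_rowSeg_fix {D : PipeDream} {r a b v : ℕ} (h : v < r + a ∨ r + b < v) :
    pl (rowSeg D r a b) v = v := by
  refine pl_fix fun x hx => ?_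
  have := mem_rowSeg hx
  omega

lemma pl_rowSeg_asc {D : PipeDream} {r a b : ℕ} (hab : a ≤ b)
    (hc : ∀ t, a < t → t ≤ b → D (r, t) = true) :
    pl (rowSeg D r a b) (r + a) = r + b := by
  induction b, hab using Nat.le_induction with
  | base => simp
  | succ b hab ih =>
      rw [rowSeg_split D r hab (Nat.le_succ b), pl_append, Equiv.Perm.mul_apply,
        ih (fun t ht1 ht2 => hc t ht1 (ht2.trans (Nat.le_succ b))),
        rowSeg_single, hc (b+1) (by omega) (le_refl _)]
      simp only [if_true, pl_singleton]
      show Equiv.swap (r+b) (r+b+1) (r+b) = r + (b+1)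
      rw [Equiv.swap_apply_left]
      omega

lemma pl_rowSeg_cross {D : PipeDream} {r a m b : ℕ} (hm : D (r, m) = true)
    (ham : a < m) (hmb : m ≤ b) :
    pl (rowSeg D r a b) (r + m) = r + m - 1 := by
  have h1 : rowSeg D r a b = rowSeg D r m b ++ (rowSeg D r (m-1) m ++ rowSeg D r a (m-1)) := by
    rw [← rowSeg_split D r (by omega) (by omega), ← rowSeg_split D r (by omega) hmb]
  have hsingle : rowSeg D r (m-1) m = [r + m - 1] := by
    obtain ⟨a', rfl⟩ : ∃ a', m = a' + 1 := ⟨m - 1, by omega⟩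
    rw [show a' + 1 - 1 = a' from by omega, rowSeg_single, hm]
    simp
  have e1 : pl (rowSeg D r a (m-1)) (r+m) = r+m := pl_rowSeg_fix (by omega)
  have e2 : sw (r+m-1) (r+m) = r+m-1 := by
    have h2 : r + m - 1 + 1 = r + m := by omega
    show Equiv.swap (r + m - 1) (r + m - 1 + 1) (r + m) = r + m - 1
    rw [h2, Equiv.swap_apply_right]
  have e3 : pl (rowSeg D r m b) (r+m-1) = r+m-1 := pl_rowSeg_fix (by omega)
  rw [h1, pl_append, pl_append, hsingle, pl_singleton]
  simp only [Equiv.Perm.mul_apply, e1, e2, e3]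

end PDAux

namespace PDAux
open PipeDream

/-! ### Blocks of rows -/

def rowsSeg (n : ℕ) (D : PipeDream) (a b : ℕ) : List ℕ :=
  (List.range' (a + 1) (b - a)).flatMap (fun r => rowSeg D r 0 n)

@[simp] lemma rowsSeg_self (n : ℕ) (D : PipeDream) (a : ℕ) : rowsSeg n D a a = [] := by
  simp [rowsSeg]

lemma rowsSeg_split (n : ℕ) (D : PipeDream) {a m b : ℕ} (h1 : a ≤ m) (h2 : m ≤ b) :
    rowsSeg n D a b = rowsSeg n D a m ++ rowsSeg n D m b := by
  have key : List.range' (a+1) (m-a) ++ List.range' (m+1) (b-m) = List.range' (a+1) (b-a) := by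
    have h3 : m + 1 = (a+1) + 1 * (m-a) := by omega
    rw [h3, List.range'_append]
    congr 1
    omega
  unfold rowsSeg
  rw [← key, List.flatMap_append]

lemma rowsSeg_single (n : ℕ) (D : PipeDream) (a : ℕ) :
    rowsSeg n D a (a + 1) = rowSeg D (a + 1) 0 n := by
  have : a + 1 - a = 1 := by omega
  simp [rowsSeg, this]

lemma pl_rowsSeg_desc {n : ℕ} {D : PipeDream} {m a b : ℕ} (hm1 : 1 ≤ m) (hmn : m ≤ n)
    (hab : a ≤ b) (hc : ∀ r, a < r → r ≤ b → D (r, m) = true) :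
    pl (rowsSeg n D a b) (b + m) = a + m := by
  induction b, hab using Nat.le_induction with
  | base => simp
  | succ b hab ih =>
      rw [rowsSeg_split n D hab (Nat.le_succ b), rowsSeg_single, pl_append,
        Equiv.Perm.mul_apply]
      have e1 : pl (rowSeg D (b+1) 0 n) (b + 1 + m) = b + m := by
        have := pl_rowSeg_cross (hc (b+1) (by omega) (le_refl _)) (show 0 < m from hm1) hmn
        rw [this]
        omega
      rw [e1, ih (fun r h1 h2 => hc r h1 (h2.trans (Nat.le_succ b)))]

lemma word_eq_rowsSeg (n : ℕ) (D : PipeDream) : word n D = rowsSeg n D 0 n := by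
  unfold word rowsSeg
  rw [show n - 0 = n from rfl, List.range'_eq_map_range, List.flatMap_map]
  congr 1
  funext i
  show _ = rowSeg D (0 + 1 + i) 0 n
  unfold rowSeg
  rw [show n - 0 = n from rfl, List.range'_eq_map_range, ← List.map_reverse,
    List.filterMap_map]
  congr 1
  funext j
  show (if D (i + 1, j + 1) = true then some (i + j + 1) else none) =
    (if D (0 + 1 + i, 0 + 1 + j) = true then some (0 + 1 + i + (0 + 1 + j) - 1) else none)
  rw [show (0 + 1 + i : ℕ) = i + 1 from by omega, show (0 + 1 + j : ℕ) = j + 1 from by omega]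
  split_ifs with h
  · congr 1
    omega
  · rfl

/-! ### Inversion counting -/

lemma invCount_one (n : ℕ) : invCount 1 n = 0 := by
  unfold invCount
  rw [Finset.card_eq_zero]
  apply Finset.filter_false_of_mem
  intro p _
  simp only [Equiv.Perm.one_apply]
  omega

lemma invCount_sw_mul_le (k n : ℕ) (w : Equiv.Perm ℕ) :
    invCount (sw k * w) n ≤ invCount w n + 1 := by
  classical
  unfold invCount
  set p0 : ℕ × ℕ := (min (w⁻¹ k) (w⁻¹ (k+1)), max (w⁻¹ k) (w⁻¹ (k+1))) with hp0
  have hsub : ((Finset.Icc 1 n ×ˢ Finset.Icc 1 n).filter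
      (fun p => p.1 < p.2 ∧ (sw k * w) p.2 < (sw k * w) p.1)) ⊆
      insert p0 ((Finset.Icc 1 n ×ˢ Finset.Icc 1 n).filter
      (fun p => p.1 < p.2 ∧ w p.2 < w p.1)) := by
    intro p hp
    rw [Finset.mem_filter] at hp
    obtain ⟨hgrid, hlt, hinv⟩ := hp
    simp only [Equiv.Perm.mul_apply] at hinv
    by_cases hc : w p.1 = k ∧ w p.2 = k + 1
    · apply Finset.mem_insert.mpr
      left
      rw [hp0]
      have h1 : w⁻¹ k = p.1 := by rw [← hc.1]; simp
      have h2 : w⁻¹ (k+1) = p.2 := by rw [← hc.2]; simp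
      rw [h1, h2, show min p.1 p.2 = p.1 from by omega, show max p.1 p.2 = p.2 from by omega]
    · apply Finset.mem_insert_of_mem
      rw [Finset.mem_filter]
      refine ⟨hgrid, hlt, ?_⟩
      by_contra hno
      push_neg at hno
      have hne : w p.1 ≠ w p.2 := fun h => by
        have := w.injective h; omega
      have : w p.1 < w p.2 := by omega
      exact absurd (sw_lt this hc) (by omega)
  calc _ ≤ (insert p0 ((Finset.Icc 1 n ×ˢ Finset.Icc 1 n).filter
      (fun p => p.1 < p.2 ∧ w p.2 < w p.1))).card := Finset.card_le_card hsub
    _ ≤ _ := Finset.card_insert_le _ _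

lemma invCount_pl_le (n : ℕ) (l : List ℕ) : invCount (pl l) n ≤ l.length := by
  induction l with
  | nil => simp [invCount_one, pl]
  | cons x l ih =>
      rw [pl_cons]
      calc invCount (sw x * pl l) n ≤ invCount (pl l) n + 1 := invCount_sw_mul_le x n (pl l)
        _ ≤ l.length + 1 := by omega
        _ = (x :: l).length := by simp

/-! ### Deleting a doubly-crossing pair of letters -/

lemma conj_eq {B : List ℕ} {x y : ℕ} (h1 : pl B y = x) (h2 : pl B (y + 1) = x + 1) :
    sw x * pl B * sw y = pl B := by
  have hx : sw x = pl B * sw y * (pl B)⁻¹ := by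
    rw [show sw x = Equiv.swap (pl B y) (pl B (y+1)) from by rw [h1, h2],
      Equiv.swap_apply_apply]
  rw [hx]
  calc pl B * sw y * (pl B)⁻¹ * pl B * sw y = pl B * (sw y * sw y) := by group
    _ = pl B := by rw [Equiv.swap_mul_self, mul_one]

lemma pl_delete {B : List ℕ} {x y : ℕ} (A C : List ℕ)
    (h : sw x * pl B * sw y = pl B) :
    pl (A ++ x :: (B ++ y :: C)) = pl (A ++ (B ++ C)) := by
  simp only [pl_append, pl_cons]
  calc pl A * (sw x * (pl B * (sw y * pl C)))
      = pl A * ((sw x * pl B * sw y) * pl C) := by group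
    _ = pl A * (pl B * pl C) := by rw [h]

lemma perm_eq_pl (n : ℕ) (D : PipeDream) : perm n D = pl (word n D) := rfl

lemma crossCount_eq (n : ℕ) (D : PipeDream) : crossCount n D = (word n D).length := rfl

/-! ### Finset helpers -/

lemma min_spec {s : Finset ℕ} (hne : s.Nonempty) (c : ℕ) :
    WithTop.untopD c s.min ∈ s ∧ ∀ x ∈ s, WithTop.untopD c s.min ≤ x := by
  obtain ⟨m, hm⟩ := Finset.min_of_nonempty hne
  rw [hm, WithTop.untopD_coe]
  refine ⟨Finset.mem_of_min hm, fun x hx => ?_⟩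
  have := Finset.min_le hx
  rw [hm] at this
  exact_mod_cast this

lemma sup_spec {s : Finset ℕ} (hne : s.Nonempty) :
    s.sup id ∈ s ∧ ∀ x ∈ s, x ≤ s.sup id := by
  constructor
  · have := Finset.max'_mem s hne
    rwa [Finset.max'_eq_sup', Finset.sup'_eq_sup] at this
  · exact fun x hx => Finset.le_sup (f := id) hx

/-! ### The key lemma: the turning tile above a bump column is itself a bump -/

lemma key_turn (n : ℕ) (wp : Equiv.Perm ℕ) (D : PipeDream) (hD : D ∈ RPD n wp)
    (j P Q : ℕ) (hj : 1 ≤ j) (hjQ : j < Q) (hQn : Q ≤ n)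
    (hPQ : D (P, Q) = false) (hrow : ∀ t, j ≤ t → t < Q → D (P, t) = true)
    (hcol : ∃ h, 1 ≤ h ∧ h < P ∧ D (h, j) = false) :
    D (maxBumpRow n D P j, Q) = false := by
  obtain ⟨hstair, hperm, hcount⟩ := hD
  cases hcross : D (maxBumpRow n D P j, Q) with
  | false => rfl
  | true =>
  exfalso
  -- h0 facts
  obtain ⟨h, hh1, hhP, hhj⟩ := hcol
  have hHs : (Finset.Ico 1 P).filter (fun h => D (h, j) = false) |>.Nonempty :=
    ⟨h, Finset.mem_filter.mpr ⟨Finset.mem_Ico.mpr ⟨hh1, hhP⟩, hhj⟩⟩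
  obtain ⟨hh0mem, _⟩ := sup_spec hHs
  rw [Finset.mem_filter, Finset.mem_Ico] at hh0mem
  set h0 := hIdx D P j with hh0def
  have hh0mem' : (1 ≤ h0 ∧ h0 < P) ∧ D (h0, j) = false := hh0mem
  obtain ⟨⟨hh01, hh0P⟩, hh0j⟩ := hh0mem'
  -- kIdx = Q
  have hkis : kIdx n D P j = Q := by
    unfold kIdx
    have hQmem : Q ∈ (Finset.Icc (j+1) n).filter (fun k => D (P, k) = false) :=
      Finset.mem_filter.mpr ⟨Finset.mem_Icc.mpr ⟨by omega, hQn⟩, hPQ⟩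
    obtain ⟨hmem, hlb⟩ := min_spec ⟨Q, hQmem⟩ 0
    rw [Finset.mem_filter, Finset.mem_Icc] at hmem
    have hle := hlb Q hQmem
    rcases Nat.lt_or_ge (WithTop.untopD 0 ((Finset.Icc (j+1) n).filter
        (fun k => D (P, k) = false)).min) Q with hlt | hge
    · have := hrow _ (by omega) hlt
      rw [this] at hmem
      simp at hmem
    · omega
  -- maxBumpRow facts
  have hMsne : ((Finset.Ico (hIdx D P j) P).filter
      (fun p => ∃ q ∈ Finset.Icc j (kIdx n D P j), D (p, q) = false)).Nonempty := by
    refine ⟨h0, Finset.mem_filter.mpr ⟨Finset.mem_Ico.mpr ⟨le_refl _, hh0P⟩,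
      ⟨j, Finset.mem_Icc.mpr ⟨le_refl _, by omega⟩, hh0j⟩⟩⟩
  obtain ⟨hp'mem, hp'ub⟩ := sup_spec hMsne
  set p' := maxBumpRow n D P j with hp'def
  have hp'eq : ((Finset.Ico (hIdx D P j) P).filter
      (fun p => ∃ q ∈ Finset.Icc j (kIdx n D P j), D (p, q) = false)).sup id = p' := rfl
  have hp'mem' : p' ∈ _ := hp'mem
  rw [Finset.mem_filter, Finset.mem_Ico] at hp'mem'
  obtain ⟨⟨hh0p', hp'P⟩, qb, hqbmem, hqbf⟩ := hp'mem'
  rw [hkis, Finset.mem_Icc] at hqbmem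
  have hp'1 : 1 ≤ p' := le_trans hh01 hh0p'
  have hrows : ∀ r, p' < r → r < P → ∀ t, j ≤ t → t ≤ Q → D (r, t) = true := by
    intro r h1 h2 t ht1 ht2
    cases hv : D (r, t) with
    | true => rfl
    | false =>
        exfalso
        have : r ∈ (Finset.Ico (hIdx D P j) P).filter
            (fun p => ∃ q ∈ Finset.Icc j (kIdx n D P j), D (p, q) = false) := by
          refine Finset.mem_filter.mpr ⟨Finset.mem_Ico.mpr ⟨by omega, h2⟩,
            t, ?_, hv⟩
          rw [hkis, Finset.mem_Icc]
          omega
        have hle := hp'ub r this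
        rw [hp'eq] at hle
        omega
  -- the column C
  have hqbQ : qb ≠ Q := by
    intro e
    rw [e, hcross] at hqbf
    exact absurd hqbf (by simp)
  have hCs : ((Finset.Ico j Q).filter (fun t => D (p', t) = false)).Nonempty :=
    ⟨qb, Finset.mem_filter.mpr ⟨Finset.mem_Ico.mpr ⟨hqbmem.1, by omega⟩, hqbf⟩⟩
  obtain ⟨hCmem, hCub⟩ := sup_spec hCs
  set C := ((Finset.Ico j Q).filter (fun t => D (p', t) = false)).sup id with hCdef
  rw [Finset.mem_filter, Finset.mem_Ico] at hCmem
  obtain ⟨⟨hjC, hCQ⟩, hCf⟩ := hCmem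
  have hC1 : 1 ≤ C := le_trans hj hjC
  have hCmax : ∀ t, C < t → t < Q → D (p', t) = true := by
    intro t h1 h2
    cases hv : D (p', t) with
    | true => rfl
    | false =>
        exfalso
        have : t ∈ (Finset.Ico j Q).filter (fun t => D (p', t) = false) :=
          Finset.mem_filter.mpr ⟨Finset.mem_Ico.mpr ⟨by omega, h2⟩, hv⟩
        have := hCub t this
        omega
  -- bounds
  have hPn : P ≤ n := by
    have := hstair P C (hrow C hjC hCQ)
    omega
  have hp'n : p' ≤ n := by omega
  -- single-row extraction
  have hrow_p' : rowsSeg n D (p'-1) p' = rowSeg D p' 0 n := by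
    have e := rowsSeg_single n D (p'-1)
    rw [show p'-1+1 = p' from by omega] at e
    exact e
  have hrow_P : rowsSeg n D (P-1) P = rowSeg D P 0 n := by
    have e := rowsSeg_single n D (P-1)
    rw [show P-1+1 = P from by omega] at e
    exact e
  have hsplit : word n D = rowsSeg n D 0 (p'-1) ++ (rowSeg D p' 0 n ++
      (rowsSeg n D p' (P-1) ++ (rowSeg D P 0 n ++ rowsSeg n D P n))) := by
    rw [word_eq_rowsSeg,
      rowsSeg_split n D (show (0:ℕ) ≤ p'-1 by omega) (show p'-1 ≤ n by omega),
      rowsSeg_split n D (show p'-1 ≤ p' by omega) (show p' ≤ n by omega),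
      rowsSeg_split n D (show p' ≤ P-1 by omega) (show P-1 ≤ n by omega),
      rowsSeg_split n D (show P-1 ≤ P by omega) (show P ≤ n from hPn),
      hrow_p', hrow_P]
  have hrowp'_split : rowSeg D p' 0 n =
      (rowSeg D p' Q n ++ [p' + Q - 1]) ++ rowSeg D p' 0 (Q-1) := by
    rw [rowSeg_split D p' (show (0:ℕ) ≤ Q-1 by omega) (show Q-1 ≤ n by omega),
        rowSeg_split D p' (show Q-1 ≤ Q by omega) (show Q ≤ n from hQn)]
    have e := rowSeg_single D p' (Q-1)
    rw [show Q-1+1 = Q from by omega] at e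
    rw [e, hcross, if_pos rfl, show p' + (Q-1) = p' + Q - 1 from by omega]
  have hrowP_split : rowSeg D P 0 n =
      (rowSeg D P C n ++ [P + C - 1]) ++ rowSeg D P 0 (C-1) := by
    rw [rowSeg_split D P (show (0:ℕ) ≤ C-1 by omega) (show C-1 ≤ n by omega),
        rowSeg_split D P (show C-1 ≤ C by omega) (show C ≤ n by omega)]
    have e := rowSeg_single D P (C-1)
    rw [show C-1+1 = C from by omega] at e
    rw [e, hrow C hjC hCQ, if_pos rfl, show P + (C-1) = P + C - 1 from by omega]
  set A := rowsSeg n D 0 (p'-1) ++ rowSeg D p' Q n with hAdef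
  set B := rowSeg D p' 0 (Q-1) ++ (rowsSeg n D p' (P-1) ++ rowSeg D P C n) with hBdef
  set Cl := rowSeg D P 0 (C-1) ++ rowsSeg n D P n with hCldef
  have hword : word n D = A ++ (p' + Q - 1) :: (B ++ (P + C - 1) :: Cl) := by
    rw [hsplit, hrowp'_split, hrowP_split, hAdef, hBdef, hCldef]
    simp [List.append_assoc]
  -- evaluations
  have e1b : pl (rowSeg D p' 0 (Q-1)) (p' + C) = p' + Q - 1 := by
    rw [rowSeg_split D p' (show (0:ℕ) ≤ C from by omega) (show C ≤ Q-1 from by omega),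
        rowSeg_split D p' (show (0:ℕ) ≤ C-1 from by omega) (show C-1 ≤ C from by omega),
        pl_append, pl_append, Equiv.Perm.mul_apply, Equiv.Perm.mul_apply,
        pl_rowSeg_fix (a := 0) (b := C-1) (v := p' + C) (Or.inr (by omega))]
    have e := rowSeg_single D p' (C-1)
    rw [show C-1+1 = C from by omega] at e
    rw [e, hCf]
    simp only [Bool.false_eq_true, if_false, pl_nil, Equiv.Perm.one_apply]
    rw [pl_rowSeg_asc (by omega) (fun t h1 h2 => hCmax t h1 (by omega))]
    omega
  have e1a : pl (rowSeg D p' 0 (Q-1)) (p' + Q) = p' + Q :=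
    pl_rowSeg_fix (Or.inr (by omega))
  have e2b : pl (rowsSeg n D p' (P-1)) (P + C - 1) = p' + C := by
    rw [show P + C - 1 = (P-1) + C from by omega]
    exact pl_rowsSeg_desc hC1 (by omega) (by omega)
      (fun r h1 h2 => hrows r h1 (by omega) C hjC (by omega))
  have e2a : pl (rowsSeg n D p' (P-1)) (P + Q - 1) = p' + Q := by
    rw [show P + Q - 1 = (P-1) + Q from by omega]
    exact pl_rowsSeg_desc (by omega) hQn (by omega)
      (fun r h1 h2 => hrows r h1 (by omega) Q (by omega) (le_refl _))
  have e3b : pl (rowSeg D P C n) (P + C - 1) = P + C - 1 :=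
    pl_rowSeg_fix (Or.inl (by omega))
  have e3a : pl (rowSeg D P C n) (P + C) = P + Q - 1 := by
    rw [rowSeg_split D P (show C ≤ Q-1 from by omega) (show Q-1 ≤ n from by omega),
        rowSeg_split D P (show Q-1 ≤ Q from by omega) (show Q ≤ n from hQn),
        pl_append, pl_append, Equiv.Perm.mul_apply, Equiv.Perm.mul_apply,
        pl_rowSeg_asc (show C ≤ Q-1 from by omega)
          (fun t h1 h2 => hrow t (by omega) (by omega))]
    have e := rowSeg_single D P (Q-1)
    rw [show Q-1+1 = Q from by omega] at e
    rw [e, hPQ]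
    simp only [Bool.false_eq_true, if_false, pl_nil, Equiv.Perm.one_apply]
    rw [pl_rowSeg_fix (a := Q) (b := n) (v := P + (Q-1)) (Or.inl (by omega))]
    omega
  have hBy : pl B (P + C - 1) = p' + Q - 1 := by
    rw [hBdef, pl_append, pl_append, Equiv.Perm.mul_apply, Equiv.Perm.mul_apply,
      e3b, e2b, e1b]
  have hBy1 : pl B (P + C - 1 + 1) = p' + Q - 1 + 1 := by
    rw [show P + C - 1 + 1 = P + C from by omega, hBdef, pl_append, pl_append,
      Equiv.Perm.mul_apply, Equiv.Perm.mul_apply, e3a, e2a, e1a]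
    omega
  have hconj := conj_eq hBy hBy1
  have hdel := pl_delete A Cl hconj
  have hfinal : wp = pl (A ++ (B ++ Cl)) := by
    rw [← hperm, perm_eq_pl, hword, hdel]
  have hle := invCount_pl_le n (A ++ (B ++ Cl))
  rw [← hfinal] at hle
  have hlen : (word n D).length = (A ++ (B ++ Cl)).length + 2 := by
    rw [hword]
    simp [List.length_append]
    omega
  have hcc : crossCount n D = (word n D).length := rfl
  omega

/-! ### Path structure -/

lemma maxBumpRow_le (n : ℕ) (D : PipeDream) (P j : ℕ) : maxBumpRow n D P j ≤ P := by
  unfold maxBumpRow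
  apply Finset.sup_le
  intro b hb
  rw [Finset.mem_filter, Finset.mem_Ico] at hb
  exact hb.1.2.le

lemma inv_setup (n : ℕ) (D : PipeDream) (j P Q : ℕ)
    (hj : 1 ≤ j) (hjQ : j < Q) (hQn : Q ≤ n) (hPQ : D (P, Q) = false)
    (hrow : ∀ t, j ≤ t → t < Q → D (P, t) = true)
    (hcol : ∃ h, 1 ≤ h ∧ h < P ∧ D (h, j) = false) :
    1 ≤ maxBumpRow n D P j ∧ maxBumpRow n D P j < P ∧
    (j ≤ WithTop.untopD j (((Finset.Icc j n).filter
        (fun t => D (maxBumpRow n D P j, t) = false)).min) ∧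
      WithTop.untopD j (((Finset.Icc j n).filter
        (fun t => D (maxBumpRow n D P j, t) = false)).min) ≤ Q) ∧
    D (maxBumpRow n D P j, WithTop.untopD j (((Finset.Icc j n).filter
        (fun t => D (maxBumpRow n D P j, t) = false)).min)) = false ∧
    (∀ t, j ≤ t → t < WithTop.untopD j (((Finset.Icc j n).filter
        (fun t => D (maxBumpRow n D P j, t) = false)).min) →
      D (maxBumpRow n D P j, t) = true) ∧
    (WithTop.untopD j (((Finset.Icc j n).filter
        (fun t => D (maxBumpRow n D P j, t) = false)).min) ≠ j →
      ∃ h, 1 ≤ h ∧ h < maxBumpRow n D P j ∧ D (h, j) = false) := by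
  obtain ⟨h, hh1, hhP, hhj⟩ := hcol
  have hHs : (Finset.Ico 1 P).filter (fun h => D (h, j) = false) |>.Nonempty :=
    ⟨h, Finset.mem_filter.mpr ⟨Finset.mem_Ico.mpr ⟨hh1, hhP⟩, hhj⟩⟩
  obtain ⟨hh0mem, _⟩ := sup_spec hHs
  rw [Finset.mem_filter, Finset.mem_Ico] at hh0mem
  set h0 := hIdx D P j with hh0def
  have hh0mem' : (1 ≤ h0 ∧ h0 < P) ∧ D (h0, j) = false := hh0mem
  obtain ⟨⟨hh01, hh0P⟩, hh0j⟩ := hh0mem'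
  have hkis : kIdx n D P j = Q := by
    unfold kIdx
    have hQmem : Q ∈ (Finset.Icc (j+1) n).filter (fun k => D (P, k) = false) :=
      Finset.mem_filter.mpr ⟨Finset.mem_Icc.mpr ⟨by omega, hQn⟩, hPQ⟩
    obtain ⟨hmem, hlb⟩ := min_spec ⟨Q, hQmem⟩ 0
    rw [Finset.mem_filter, Finset.mem_Icc] at hmem
    have hle := hlb Q hQmem
    rcases Nat.lt_or_ge (WithTop.untopD 0 ((Finset.Icc (j+1) n).filter
        (fun k => D (P, k) = false)).min) Q with hlt | hge
    · have := hrow _ (by omega) hlt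
      rw [this] at hmem
      simp at hmem
    · omega
  have hMsne : ((Finset.Ico (hIdx D P j) P).filter
      (fun p => ∃ q ∈ Finset.Icc j (kIdx n D P j), D (p, q) = false)).Nonempty := by
    refine ⟨h0, Finset.mem_filter.mpr ⟨Finset.mem_Ico.mpr ⟨le_refl _, hh0P⟩,
      ⟨j, Finset.mem_Icc.mpr ⟨le_refl _, by omega⟩, hh0j⟩⟩⟩
  obtain ⟨hp'mem, hp'ub⟩ := sup_spec hMsne
  set p' := maxBumpRow n D P j with hp'def
  have hp'mem' : p' ∈ _ := hp'mem
  rw [Finset.mem_filter, Finset.mem_Ico] at hp'mem'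
  obtain ⟨⟨hh0p', hp'P⟩, qb, hqbmem, hqbf⟩ := hp'mem'
  rw [hkis, Finset.mem_Icc] at hqbmem
  have hp'1 : 1 ≤ p' := le_trans hh01 hh0p'
  -- q' facts
  have hTne : ((Finset.Icc j n).filter (fun t => D (p', t) = false)).Nonempty :=
    ⟨qb, Finset.mem_filter.mpr ⟨Finset.mem_Icc.mpr ⟨hqbmem.1, by omega⟩, hqbf⟩⟩
  obtain ⟨hq'mem, hq'lb⟩ := min_spec hTne j
  set q' := WithTop.untopD j (((Finset.Icc j n).filter
      (fun t => D (p', t) = false)).min) with hq'def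
  rw [Finset.mem_filter, Finset.mem_Icc] at hq'mem
  obtain ⟨⟨hjq', hq'n⟩, hq'f⟩ := hq'mem
  have hq'qb : q' ≤ qb := hq'lb qb
    (Finset.mem_filter.mpr ⟨Finset.mem_Icc.mpr ⟨hqbmem.1, by omega⟩, hqbf⟩)
  refine ⟨hp'1, hp'P, ⟨hjq', by omega⟩, hq'f, ?_, ?_⟩
  · intro t ht1 ht2
    cases hv : D (p', t) with
    | true => rfl
    | false =>
        exfalso
        have : t ∈ (Finset.Icc j n).filter (fun t => D (p', t) = false) :=
          Finset.mem_filter.mpr ⟨Finset.mem_Icc.mpr ⟨ht1, by omega⟩, hv⟩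
        have := hq'lb t this
        omega
  · intro hq'j
    refine ⟨h0, hh01, ?_, hh0j⟩
    rcases Nat.lt_or_ge h0 p' with hlt | hge
    · exact hlt
    · exfalso
      have he : h0 = p' := le_antisymm hh0p' (by omega)
      have : j ∈ (Finset.Icc j n).filter (fun t => D (p', t) = false) :=
        Finset.mem_filter.mpr ⟨Finset.mem_Icc.mpr ⟨le_refl _, by omega⟩, he ▸ hh0j⟩
      have := hq'lb j this
      omega

lemma pathAux_succ (n : ℕ) (D : PipeDream) (j fuel P Q : ℕ) :
    pathAux n D j (fuel + 1) (P, Q) =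
      (if WithTop.untopD j (((Finset.Icc j n).filter
          (fun t => D (maxBumpRow n D P j, t) = false)).min) = j then
        (((Finset.Icc (maxBumpRow n D P j) P).image fun r => (r, Q)) ∪
          ((Finset.Icc (WithTop.untopD j (((Finset.Icc j n).filter
            (fun t => D (maxBumpRow n D P j, t) = false)).min)) Q).image
            fun t => (maxBumpRow n D P j, t)))
      else
        ((((Finset.Icc (maxBumpRow n D P j) P).image fun r => (r, Q)) ∪
          ((Finset.Icc (WithTop.untopD j (((Finset.Icc j n).filter
            (fun t => D (maxBumpRow n D P j, t) = false)).min)) Q).image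
            fun t => (maxBumpRow n D P j, t))) ∪
          pathAux n D j fuel (maxBumpRow n D P j,
            WithTop.untopD j (((Finset.Icc j n).filter
              (fun t => D (maxBumpRow n D P j, t) = false)).min)))) := rfl

lemma start_mem_pathAux (n : ℕ) (D : PipeDream) (j fuel P Q : ℕ) :
    (P, Q) ∈ pathAux n D j (fuel + 1) (P, Q) := by
  rw [pathAux_succ]
  have hPV : (P, Q) ∈ (Finset.Icc (maxBumpRow n D P j) P).image fun r => (r, Q) :=
    Finset.mem_image.mpr ⟨P, Finset.mem_Icc.mpr ⟨maxBumpRow_le n D P j, le_refl _⟩, rfl⟩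
  split_ifs
  · exact Finset.mem_union_left _ hPV
  · exact Finset.mem_union_left _ (Finset.mem_union_left _ hPV)

lemma pathAux_main (n : ℕ) (wp : Equiv.Perm ℕ) (D : PipeDream) (hD : D ∈ RPD n wp) (j : ℕ) :
    ∀ fuel P Q, P ≤ fuel → 1 ≤ j → j < Q → Q ≤ n → D (P, Q) = false →
      (∀ t, j ≤ t → t < Q → D (P, t) = true) →
      (∃ h, 1 ≤ h ∧ h < P ∧ D (h, j) = false) →
      (∀ a b, (a, b) ∈ pathAux n D j fuel (P, Q) → 1 ≤ a ∧ a ≤ P ∧ j ≤ b ∧ b ≤ Q) ∧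
      (∀ a b, (a, b) ∈ pathAux n D j fuel (P, Q) → a = P → b = Q) ∧
      (∀ a b, (a, b) ∈ pathAux n D j fuel (P, Q) →
        (((a - 1, b) ∈ pathAux n D j fuel (P, Q) ∧ (a, b + 1) ∈ pathAux n D j fuel (P, Q)) ∨
          ((a, b - 1) ∈ pathAux n D j fuel (P, Q) ∧ (a + 1, b) ∈ pathAux n D j fuel (P, Q))) →
        D (a, b) = false) := by
  intro fuel
  induction fuel with
  | zero =>
      intro P Q hPf hj hjQ hQn hPQ hrow hcol
      refine ⟨?_, ?_, ?_⟩ <;> intro a b hab <;> simp [pathAux] at hab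
  | succ fuel ih =>
      intro P Q hPf hj hjQ hQn hPQ hrow hcol
      obtain ⟨hp'1, hp'P, ⟨hjq', hq'Q⟩, hq'f, hq'row, hq'col⟩ :=
        inv_setup n D j P Q hj hjQ hQn hPQ hrow hcol
      set p' := maxBumpRow n D P j with hp'def
      set q' := WithTop.untopD j (((Finset.Icc j n).filter
          (fun t => D (p', t) = false)).min) with hq'def
      have hkey : D (p', Q) = false := key_turn n wp D hD j P Q hj hjQ hQn hPQ hrow hcol
      have IH : q' ≠ j →
          (∀ a b, (a, b) ∈ pathAux n D j fuel (p', q') → 1 ≤ a ∧ a ≤ p' ∧ j ≤ b ∧ b ≤ q') ∧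
          (∀ a b, (a, b) ∈ pathAux n D j fuel (p', q') → a = p' → b = q') ∧
          (∀ a b, (a, b) ∈ pathAux n D j fuel (p', q') →
            (((a - 1, b) ∈ pathAux n D j fuel (p', q') ∧
                (a, b + 1) ∈ pathAux n D j fuel (p', q')) ∨
              ((a, b - 1) ∈ pathAux n D j fuel (p', q') ∧
                (a + 1, b) ∈ pathAux n D j fuel (p', q'))) →
            D (a, b) = false) := fun hne =>
        ih p' q' (by omega) hj (lt_of_le_of_ne hjq' (Ne.symm hne)) (by omega) hq'f hq'row
          (hq'col hne)
      have hiff : ∀ a b : ℕ, ((a, b) ∈ pathAux n D j (fuel + 1) (P, Q)) ↔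
          ((p' ≤ a ∧ a ≤ P ∧ b = Q) ∨ (a = p' ∧ q' ≤ b ∧ b ≤ Q) ∨
            (q' ≠ j ∧ (a, b) ∈ pathAux n D j fuel (p', q'))) := by
        intro a b
        rw [pathAux_succ]
        rw [← hp'def, ← hq'def]
        split_ifs with hqj
        · simp only [Finset.mem_union, Finset.mem_image, Finset.mem_Icc, Prod.mk.injEq]
          constructor
          · rintro (⟨r, hr, rfl, rfl⟩ | ⟨t, ht, rfl, rfl⟩)
            · exact Or.inl ⟨hr.1, hr.2, rfl⟩
            · exact Or.inr (Or.inl ⟨rfl, ht.1, ht.2⟩)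
          · rintro (⟨h1, h2, rfl⟩ | ⟨rfl, h1, h2⟩ | ⟨hne, _⟩)
            · exact Or.inl ⟨a, ⟨h1, h2⟩, rfl, rfl⟩
            · exact Or.inr ⟨b, ⟨h1, h2⟩, rfl, rfl⟩
            · exact absurd hqj hne
        · simp only [Finset.mem_union, Finset.mem_image, Finset.mem_Icc, Prod.mk.injEq]
          constructor
          · rintro ((⟨r, hr, rfl, rfl⟩ | ⟨t, ht, rfl, rfl⟩) | hrest)
            · exact Or.inl ⟨hr.1, hr.2, rfl⟩
            · exact Or.inr (Or.inl ⟨rfl, ht.1, ht.2⟩)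
            · exact Or.inr (Or.inr ⟨hqj, hrest⟩)
          · rintro (⟨h1, h2, rfl⟩ | ⟨rfl, h1, h2⟩ | ⟨_, hrest⟩)
            · exact Or.inl (Or.inl ⟨a, ⟨h1, h2⟩, rfl, rfl⟩)
            · exact Or.inl (Or.inr ⟨b, ⟨h1, h2⟩, rfl, rfl⟩)
            · exact Or.inr hrest
      refine ⟨?_, ?_, ?_⟩
      · intro a b hab
        rcases (hiff a b).mp hab with ⟨h1, h2, h3⟩ | ⟨h1, h2, h3⟩ | ⟨hne, hS'⟩
        · omega
        · omega
        · have := (IH hne).1 a b hS'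
          omega
      · intro a b hab haP
        rcases (hiff a b).mp hab with ⟨h1, h2, h3⟩ | ⟨h1, h2, h3⟩ | ⟨hne, hS'⟩
        · exact h3
        · omega
        · have := (IH hne).1 a b hS'
          omega
      · intro a b hab hcor
        rcases (hiff a b).mp hab with ⟨h1, h2, hbQ⟩ | ⟨hap', h1, h2⟩ | ⟨hne, hS'⟩
        · -- on the vertical segment
          rcases hcor with ⟨hc1, hc2⟩ | ⟨hc1, hc2⟩
          · exfalso
            rcases (hiff a (b+1)).mp hc2 with ⟨_, _, h3⟩ | ⟨_, _, h3⟩ | ⟨hne, hS2⟩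
            · omega
            · omega
            · have := (IH hne).1 a (b+1) hS2
              omega
          · have hap : a = p' := by
              rcases (hiff a (b-1)).mp hc1 with ⟨_, _, h3⟩ | ⟨h3, _, _⟩ | ⟨hne, hS2⟩
              · omega
              · omega
              · have := (IH hne).1 a (b-1) hS2
                omega
            rw [hap, hbQ]
            exact hkey
        · -- on the horizontal segment
          rcases hcor with ⟨hc1, hc2⟩ | ⟨hc1, hc2⟩
          · rcases (hiff (a-1) b).mp hc1 with ⟨h3, _, _⟩ | ⟨h3, _, _⟩ | ⟨hne, hS2⟩
            · exact absurd h3 (by omega)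
            · exact absurd h3 (by omega)
            · have := (IH hne).1 (a-1) b hS2
              have hbq : b = q' := by omega
              rw [hap', hbq]
              exact hq'f
          · rcases (hiff (a+1) b).mp hc2 with ⟨_, _, h3⟩ | ⟨h3, _, _⟩ | ⟨hne, hS2⟩
            · rw [hap', h3]
              exact hkey
            · exact absurd h3 (by omega)
            · have := (IH hne).1 (a+1) b hS2
              exact absurd this.2.1 (by omega)
        · -- in the recursive part
          have hIH := IH hne
          have hb1 := hIH.1 a b hS'
          rcases hcor with ⟨hc1, hc2⟩ | ⟨hc1, hc2⟩
          · have hc1' : (a-1, b) ∈ pathAux n D j fuel (p', q') := by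
              rcases (hiff (a-1) b).mp hc1 with ⟨h3, _, _⟩ | ⟨h3, _, _⟩ | ⟨_, hS2⟩
              · exact absurd h3 (by omega)
              · exact absurd h3 (by omega)
              · exact hS2
            by_cases hap : a = p'
            · have hbq : b = q' := hIH.2.1 a b hS' hap
              rw [hap, hbq]
              exact hq'f
            · have hc2' : (a, b+1) ∈ pathAux n D j fuel (p', q') := by
                rcases (hiff a (b+1)).mp hc2 with ⟨h3, _, _⟩ | ⟨h3, _, _⟩ | ⟨_, hS2⟩
                · exact absurd h3 (by omega)
                · exact absurd h3 (by omega)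
                · exact hS2
              exact hIH.2.2 a b hS' (Or.inl ⟨hc1', hc2'⟩)
          · have hc1' : (a, b-1) ∈ pathAux n D j fuel (p', q') := by
              rcases (hiff a (b-1)).mp hc1 with ⟨_, _, h3⟩ | ⟨_, h3, _⟩ | ⟨_, hS2⟩
              · exact absurd h3 (by omega)
              · exact absurd h3 (by omega)
              · exact hS2
            rcases (hiff (a+1) b).mp hc2 with ⟨h3, h4, h5⟩ | ⟨h3, h4, h5⟩ | ⟨_, hS2⟩
            · by_cases hap : a = p'
              · have hbq : b = q' := hIH.2.1 a b hS' hap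
                rw [hap, hbq]
                exact hq'f
              · have ha1 : a + 1 = p' := by omega
                obtain ⟨f', hf'⟩ : ∃ f', fuel = f' + 1 := ⟨fuel - 1, by omega⟩
                have hbq : b = q' := by omega
                have hc2' : (a+1, b) ∈ pathAux n D j fuel (p', q') := by
                  rw [ha1, hbq, hf']
                  exact start_mem_pathAux n D j f' p' q'
                exact hIH.2.2 a b hS' (Or.inr ⟨hc1', hc2'⟩)
            · by_cases hap : a = p'
              · exact absurd h3 (by omega)
              · have hbq : b = q' := by omega
                obtain ⟨f', hf'⟩ : ∃ f', fuel = f' + 1 := ⟨fuel - 1, by omega⟩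
                have hc2' : (a+1, b) ∈ pathAux n D j fuel (p', q') := by
                  rw [h3, hbq, hf']
                  exact start_mem_pathAux n D j f' p' q'
                exact hIH.2.2 a b hS' (Or.inr ⟨hc1', hc2'⟩)
            · exact hIH.2.2 a b hS' (Or.inr ⟨hc1', hS2⟩)

end PDAux

open PipeDream in
/-- every corner of Path_{ij}(D) is a bump tile of D. -/
theorem stmt3 (n : ℕ) (w : Equiv.Perm ℕ) (D : PipeDream) (hD : D ∈ RPD n w)
    (i j : ℕ) (hmov : Movable D i j) (p q : ℕ)
    (hmem : (p, q) ∈ Path n D i j)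
    (hcorner : ((p - 1, q) ∈ Path n D i j ∧ (p, q + 1) ∈ Path n D i j) ∨
      ((p, q - 1) ∈ Path n D i j ∧ (p + 1, q) ∈ Path n D i j)) :
    D (p, q) = false := by
  have hij := hmov.1
  obtain ⟨h, hh1, hhi, hhj⟩ := hmov.2
  have hst := hD.1 i j hij
  have hi2 : 2 ≤ i := by omega
  have hDin : D (i, n) = false := by
    cases hb : D (i, n) with
    | false => rfl
    | true => exact absurd (hD.1 i n hb) (by omega)
  have hjn : j + 1 ≤ n := by omega
  have hkdef : kIdx n D i j = WithTop.untopD 0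
      (((Finset.Icc (j+1) n).filter (fun k => D (i, k) = false)).min) := rfl
  have hKmemn : n ∈ (Finset.Icc (j+1) n).filter (fun k => D (i, k) = false) :=
    Finset.mem_filter.mpr ⟨Finset.mem_Icc.mpr ⟨hjn, le_refl n⟩, hDin⟩
  obtain ⟨hKmem, hKlb⟩ := PDAux.min_spec ⟨n, hKmemn⟩ 0
  rw [← hkdef] at hKmem hKlb
  rw [Finset.mem_filter, Finset.mem_Icc] at hKmem
  have hKrow : ∀ t, j ≤ t → t < kIdx n D i j → D (i, t) = true := by
    intro t ht1 ht2
    rcases eq_or_lt_of_le ht1 with rfl | hlt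
    · exact hij
    · cases hv : D (i, t) with
      | true => rfl
      | false =>
          exfalso
          have hKn := hKmem.1.2
          have ht : t ∈ (Finset.Icc (j+1) n).filter (fun k => D (i, k) = false) :=
            Finset.mem_filter.mpr ⟨Finset.mem_Icc.mpr ⟨by omega, by omega⟩, hv⟩
          have := hKlb t ht
          omega
  have hmain := PDAux.pathAux_main n w D hD j i i (kIdx n D i j) (le_refl i) hst.2.1
    (by omega) hKmem.1.2 hKmem.2 hKrow ⟨h, hh1, hhi, hhj⟩
  exact hmain.2.2 p q hmem hcorner
end

section
/- Let D be a reduced pipe dream with a movable cross tile (i,j). Define the recursive move operation M_{ij}: if max_bump_row_{ij}(D)=h_{ij}(D) and min_bump_col_{ij}(D)=k_{ij}(D), set M_{ij}(D)=L_{ij}(D); if a = max_bump_row_{ij}(D) > h_{ij}(D), set M_{ij}(D)=M_{ij}(M_{aj}(D)); otherwise, with b = min_bump_col_{ij}(D), set M_{ij}(D)=M_{ij}(M_{ib}(D)). Then this recursion is well-defined and terminates: in case (ii) the tile (a,j) is movable in D, in case (iii) the tile (i,b) is movable in D, and the recursion strictly decreases an appropriate measure. -/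
open Finset

namespace PipeDream

/-! ### Auxiliary lemmas for Statement 4 -/

lemma sup_id_mem {S : Finset ℕ} (h : S.Nonempty) : S.sup id ∈ S := by
  obtain ⟨b, hb, he⟩ := Finset.exists_mem_eq_sup S h id
  rw [he]; exact hb

lemma untop_min_mem {S : Finset ℕ} (h : S.Nonempty) : WithTop.untopD 0 S.min ∈ S := by
  obtain ⟨a, ha⟩ := Finset.min_of_nonempty h
  rw [ha, WithTop.untopD_coe]
  exact Finset.mem_of_min ha

lemma untop_min_le {S : Finset ℕ} {a : ℕ} (ha : a ∈ S) : WithTop.untopD 0 S.min ≤ a := by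
  obtain ⟨m, hm⟩ := Finset.min_of_nonempty ⟨a, ha⟩
  have h2 := Finset.min_le ha
  rw [hm] at h2 ⊢
  rw [WithTop.untopD_coe]
  exact_mod_cast h2

lemma hIdx_spec (D : PipeDream) (i j : ℕ) (hmov : Movable D i j) :
    1 ≤ hIdx D i j ∧ hIdx D i j < i ∧ D (hIdx D i j, j) = false := by
  obtain ⟨-, h0, h1, h2, h3⟩ := hmov
  have hne : ((Finset.Ico 1 i).filter fun h => D (h, j) = false).Nonempty :=
    ⟨h0, Finset.mem_filter.2 ⟨Finset.mem_Ico.2 ⟨h1, h2⟩, h3⟩⟩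
  have hm : hIdx D i j ∈ (Finset.Ico 1 i).filter fun h => D (h, j) = false := sup_id_mem hne
  rw [Finset.mem_filter, Finset.mem_Ico] at hm
  exact ⟨hm.1.1, hm.1.2, hm.2⟩

lemma le_hIdx (D : PipeDream) (i j h' : ℕ) (h1 : 1 ≤ h') (h2 : h' < i)
    (h3 : D (h', j) = false) : h' ≤ hIdx D i j :=
  Finset.le_sup (f := id) (Finset.mem_filter.2 ⟨Finset.mem_Ico.2 ⟨h1, h2⟩, h3⟩)

lemma kIdx_le_n (n : ℕ) (D : PipeDream) (i j : ℕ) : kIdx n D i j ≤ n := by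
  rcases Finset.eq_empty_or_nonempty ((Finset.Icc (j + 1) n).filter fun k => D (i, k) = false)
    with he | hne
  · have : kIdx n D i j = 0 := by rw [kIdx, he, Finset.min_empty, WithTop.untopD_top]
    omega
  · have hm : kIdx n D i j ∈ (Finset.Icc (j + 1) n).filter fun k => D (i, k) = false :=
      untop_min_mem hne
    rw [Finset.mem_filter, Finset.mem_Icc] at hm
    exact hm.1.2

lemma kIdx_spec (n : ℕ) (D : PipeDream) (i j : ℕ)
    (hex : ∃ t, j + 1 ≤ t ∧ t ≤ n ∧ D (i, t) = false) :
    j + 1 ≤ kIdx n D i j ∧ kIdx n D i j ≤ n ∧ D (i, kIdx n D i j) = false := by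
  obtain ⟨t, ht1, ht2, ht3⟩ := hex
  have hne : ((Finset.Icc (j + 1) n).filter fun k => D (i, k) = false).Nonempty :=
    ⟨t, Finset.mem_filter.2 ⟨Finset.mem_Icc.2 ⟨ht1, ht2⟩, ht3⟩⟩
  have hm : kIdx n D i j ∈ (Finset.Icc (j + 1) n).filter fun k => D (i, k) = false :=
    untop_min_mem hne
  rw [Finset.mem_filter, Finset.mem_Icc] at hm
  exact ⟨hm.1.1, hm.1.2, hm.2⟩

lemma kIdx_le (n : ℕ) (D : PipeDream) (i j q : ℕ) (h1 : j + 1 ≤ q) (h2 : q ≤ n)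
    (h3 : D (i, q) = false) : kIdx n D i j ≤ q :=
  untop_min_le (Finset.mem_filter.2 ⟨Finset.mem_Icc.2 ⟨h1, h2⟩, h3⟩)

/-- Case (ii): the tile (a,j) with a = max_bump_row is movable. -/
lemma part1 (n : ℕ) (D : PipeDream) (i j : ℕ) (hmov : Movable D i j)
    (hlt : hIdx D i j < maxBumpRow n D i j) : Movable D (maxBumpRow n D i j) j := by
  obtain ⟨hh1, hh2, hh3⟩ := hIdx_spec D i j hmov
  have hne : ((Finset.Ico (hIdx D i j) i).filter
      fun p => ∃ q ∈ Finset.Icc j (kIdx n D i j), D (p, q) = false).Nonempty := by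
    by_contra hcon
    rw [Finset.not_nonempty_iff_eq_empty] at hcon
    have h0 : maxBumpRow n D i j = 0 := by rw [maxBumpRow, hcon, Finset.sup_empty]; rfl
    omega
  have hmem : maxBumpRow n D i j ∈ (Finset.Ico (hIdx D i j) i).filter
      fun p => ∃ q ∈ Finset.Icc j (kIdx n D i j), D (p, q) = false := sup_id_mem hne
  rw [Finset.mem_filter, Finset.mem_Ico] at hmem
  obtain ⟨⟨hha, hai⟩, -⟩ := hmem
  have hDa : D (maxBumpRow n D i j, j) = true := by
    cases hDa : D (maxBumpRow n D i j, j) with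
    | false =>
        have h5 := le_hIdx D i j (maxBumpRow n D i j) (by omega) hai hDa
        omega
    | true => rfl
  exact ⟨hDa, hIdx D i j, hh1, hlt, hh3⟩

/-- Case (iii): the tile (i,b) with b = min_bump_col is movable. -/
lemma part2 (n : ℕ) (D : PipeDream) (i j : ℕ) (hmov : Movable D i j)
    (hlt : minBumpCol n D i j < kIdx n D i j) : Movable D i (minBumpCol n D i j) := by
  obtain ⟨hh1, hh2, hh3⟩ := hIdx_spec D i j hmov
  have hkne : ((Finset.Icc (j + 1) n).filter fun k => D (i, k) = false).Nonempty := by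
    by_contra hcon
    rw [Finset.not_nonempty_iff_eq_empty] at hcon
    have h0 : kIdx n D i j = 0 := by rw [kIdx, hcon, Finset.min_empty, WithTop.untopD_top]
    omega
  have hkmem : kIdx n D i j ∈ (Finset.Icc (j + 1) n).filter fun k => D (i, k) = false :=
    untop_min_mem hkne
  rw [Finset.mem_filter, Finset.mem_Icc] at hkmem
  obtain ⟨⟨hk1, hk2⟩, hk3⟩ := hkmem
  have hSmem : kIdx n D i j ∈ (Finset.Icc (j + 1) (kIdx n D i j)).filter
      fun q => ∃ p ∈ Finset.Icc (hIdx D i j) i, D (p, q) = false :=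
    Finset.mem_filter.2 ⟨Finset.mem_Icc.2 ⟨hk1, le_rfl⟩,
      ⟨i, Finset.mem_Icc.2 ⟨le_of_lt hh2, le_rfl⟩, hk3⟩⟩
  have hbmem : minBumpCol n D i j ∈ (Finset.Icc (j + 1) (kIdx n D i j)).filter
      fun q => ∃ p ∈ Finset.Icc (hIdx D i j) i, D (p, q) = false :=
    untop_min_mem ⟨_, hSmem⟩
  rw [Finset.mem_filter, Finset.mem_Icc] at hbmem
  obtain ⟨⟨hb1, hb2⟩, p, hp, hpb⟩ := hbmem
  rw [Finset.mem_Icc] at hp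
  have hDib : D (i, minBumpCol n D i j) = true := by
    cases hDib : D (i, minBumpCol n D i j) with
    | false =>
        have h5 : kIdx n D i j ≤ minBumpCol n D i j :=
          kIdx_le n D i j _ hb1 (by omega) hDib
        omega
    | true => rfl
  have hpi : p < i := by
    rcases Nat.lt_or_ge p i with h | h
    · exact h
    · have hpe : p = i := le_antisymm hp.2 h
      rw [hpe, hDib] at hpb
      exact absurd hpb (by simp)
  exact ⟨hDib, p, by omega, hpi, hpb⟩

/-- The invariant maintained along the recursion of M. -/
def Inv (n : ℕ) (D : PipeDream) (i j : ℕ) : Prop :=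
  D (i, j) = true ∧ (∃ h, 1 ≤ h ∧ h < i ∧ D (h, j) = false) ∧
    1 ≤ j ∧ i ≤ n ∧ ∃ t, j + 1 ≤ t ∧ t ≤ n ∧ D (i, t) = false

def box (n : ℕ) : Finset (ℕ × ℕ) := Finset.Icc 1 n ×ˢ Finset.Icc 1 n

/-- Potential: sum of row indices of crosses in the n×n box; it strictly
decreases under every ladder move performed by the recursion. -/
def phi (n : ℕ) (D : PipeDream) : ℕ := ∑ s ∈ box n, if D s = true then s.1 else 0

/-- The termination measure for the recursion of Definition 3.4. -/
def mu (n : ℕ) (D : PipeDream) (i j : ℕ) : ℕ :=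
  phi n D * (n + 2) ^ 2 + (i - hIdx D i j) * (n + 2) + (kIdx n D i j - j)

lemma arith1 {c A B A' B' : ℕ} (h1 : A + 1 ≤ A') (h2 : B < c) :
    A * c + B < A' * c + B' := by
  calc A * c + B < A * c + c := Nat.add_lt_add_left h2 _
    _ = (A + 1) * c := (Nat.succ_mul A c).symm
    _ ≤ A' * c := Nat.mul_le_mul_right _ h1
    _ ≤ A' * c + B' := Nat.le_add_right _ _

lemma arith2 {c A B A' B' : ℕ} (h1 : A ≤ A') (h2 : B < B') : A * c + B < A' * c + B' :=
  Nat.add_lt_add_of_le_of_lt (Nat.mul_le_mul_right _ h1) h2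

lemma mu_lt_mu_of_inner (n : ℕ) (D : PipeDream) (i j i' j' : ℕ)
    (h : (i' - hIdx D i' j') * (n + 2) + (kIdx n D i' j' - j')
      < (i - hIdx D i j) * (n + 2) + (kIdx n D i j - j)) :
    mu n D i' j' < mu n D i j := by
  have h6 := Nat.add_lt_add_left h (phi n D * (n + 2) ^ 2)
  unfold mu
  calc phi n D * (n + 2) ^ 2 + (i' - hIdx D i' j') * (n + 2) + (kIdx n D i' j' - j')
      = phi n D * (n + 2) ^ 2 + ((i' - hIdx D i' j') * (n + 2) + (kIdx n D i' j' - j')) := by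
        ring
    _ < phi n D * (n + 2) ^ 2 + ((i - hIdx D i j) * (n + 2) + (kIdx n D i j - j)) := h6
    _ = phi n D * (n + 2) ^ 2 + (i - hIdx D i j) * (n + 2) + (kIdx n D i j - j) := by ring

lemma mu_lt_of_phi_lt (n : ℕ) (D D' : PipeDream) (i j i' j' : ℕ) (hi : i' ≤ n)
    (hφ : phi n D' < phi n D) : mu n D' i' j' < mu n D i j := by
  have h1 : (i' - hIdx D' i' j') * (n + 2) ≤ n * (n + 2) :=
    Nat.mul_le_mul_right _ (by omega)
  have h2 : kIdx n D' i' j' - j' ≤ n := le_trans (Nat.sub_le _ _) (kIdx_le_n n D' i' j')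
  have h3 : (phi n D' + 1) * (n + 2) ^ 2 ≤ phi n D * (n + 2) ^ 2 :=
    Nat.mul_le_mul_right _ (by omega)
  have h4 : n * (n + 2) + n < (n + 2) ^ 2 := by nlinarith
  have h5 : (phi n D' + 1) * (n + 2) ^ 2 = phi n D' * (n + 2) ^ 2 + (n + 2) ^ 2 := by ring
  have h6 : 0 ≤ (i - hIdx D i j) * (n + 2) := Nat.zero_le _
  have h7 : 0 ≤ kIdx n D i j - j := Nat.zero_le _
  unfold mu
  linarith

/-- A ladder move strictly decreases the potential. -/
lemma phi_ladder (n : ℕ) (D : PipeDream) (i j : ℕ)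
    (hij : (i, j) ∈ box n) (hhk : ((hIdx D i j, kIdx n D i j) : ℕ × ℕ) ∈ box n)
    (hcross : D (i, j) = true) (hlt : hIdx D i j < i) :
    phi n (ladderMove n D i j) < phi n D := by
  have hne : ((hIdx D i j, kIdx n D i j) : ℕ × ℕ) ≠ (i, j) := by
    intro he
    rw [Prod.mk.injEq] at he
    omega
  have hmem2 : ((hIdx D i j, kIdx n D i j) : ℕ × ℕ) ∈ (box n).erase (i, j) :=
    Finset.mem_erase.2 ⟨hne, hhk⟩
  have key : ∀ E : PipeDream, (∑ s ∈ box n, if E s = true then s.1 else 0) =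
      (∑ s ∈ ((box n).erase (i, j)).erase (hIdx D i j, kIdx n D i j),
        if E s = true then s.1 else 0)
        + (if E (hIdx D i j, kIdx n D i j) = true then hIdx D i j else 0)
        + (if E (i, j) = true then i else 0) := by
    intro E
    have e1 := Finset.sum_erase_add (box n) (fun s => if E s = true then s.1 else 0) hij
    have e2 := Finset.sum_erase_add ((box n).erase (i, j))
      (fun s => if E s = true then s.1 else 0) hmem2
    dsimp only at e1 e2
    omega
  have vL1 : ladderMove n D i j (i, j) = false := by simp [ladderMove]
  have vL2 : ladderMove n D i j (hIdx D i j, kIdx n D i j) = true := by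
    simp [ladderMove, hne]
  have hsum : (∑ s ∈ ((box n).erase (i, j)).erase (hIdx D i j, kIdx n D i j),
      if ladderMove n D i j s = true then s.1 else 0)
      = ∑ s ∈ ((box n).erase (i, j)).erase (hIdx D i j, kIdx n D i j),
        if D s = true then s.1 else 0 := by
    refine Finset.sum_congr rfl fun s hs => ?_
    rw [Finset.mem_erase, Finset.mem_erase] at hs
    have : ladderMove n D i j s = D s := by
      simp [ladderMove, hs.1, hs.2.1]
    rw [this]
  have eL := key (ladderMove n D i j)
  have eD := key D
  rw [hsum, vL1, vL2] at eL
  rw [hcross] at eD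
  show (∑ s ∈ box n, if ladderMove n D i j s = true then s.1 else 0)
      < ∑ s ∈ box n, if D s = true then s.1 else 0
  rw [eL, eD]
  have hle : (if D (hIdx D i j, kIdx n D i j) = true then hIdx D i j else 0) ≤ hIdx D i j := by
    split <;> omega
  have r1 : (if (true : Bool) = true then hIdx D i j else 0) = hIdx D i j := rfl
  have r2 : (if (true : Bool) = true then i else 0) = i := rfl
  have r3 : (if (false : Bool) = true then i else 0) = 0 := rfl
  rw [r1, r2, r3]
  omega

/-- Main termination lemma, by strong induction on the measure `mu`. -/
lemma main (n : ℕ) : ∀ (N : ℕ) (D : PipeDream) (i j : ℕ), mu n D i j ≤ N → Inv n D i j →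
    ∃ F, 1 ≤ F ∧ (∀ F', F ≤ F' → moveAux n F' D i j = moveAux n F D i j) ∧
      phi n (moveAux n F D i j) < phi n D ∧
      (∀ s, moveAux n F D i j s ≠ D s → s.1 ≤ i ∧ j ≤ s.2) ∧
      (∀ s, moveAux n F D i j s = true → D s = false → s.1 < i ∧ j < s.2) := by
  intro N
  induction N using Nat.strong_induction_on with
  | _ N IH =>
  intro D i j hμ hinv
  obtain ⟨hcross, hab, hj1, hiN, hbump⟩ := hinv
  have hmov : Movable D i j := ⟨hcross, hab⟩
  obtain ⟨hh1, hh2, hh3⟩ := hIdx_spec D i j hmov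
  obtain ⟨hk1, hk2, hk3⟩ := kIdx_spec n D i j hbump
  by_cases hA : maxBumpRow n D i j = hIdx D i j ∧ minBumpCol n D i j = kIdx n D i j
  · -- Case (i): perform the ladder move.
    have hval : ∀ m, moveAux n (m + 1) D i j = ladderMove n D i j := by
      intro m
      simp only [moveAux]
      rw [if_pos hA]
    refine ⟨1, le_rfl, ?_, ?_, ?_, ?_⟩
    · intro F' hF'
      obtain ⟨m, rfl⟩ : ∃ m, F' = m + 1 := ⟨F' - 1, by omega⟩
      rw [hval m, hval 0]
    · rw [hval 0]
      refine phi_ladder n D i j ?_ ?_ hcross hh2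
      · rw [box, Finset.mem_product]
        exact ⟨Finset.mem_Icc.2 ⟨by omega, hiN⟩, Finset.mem_Icc.2 ⟨hj1, by omega⟩⟩
      · rw [box, Finset.mem_product]
        exact ⟨Finset.mem_Icc.2 ⟨hh1, by omega⟩, Finset.mem_Icc.2 ⟨by omega, hk2⟩⟩
    · rw [hval 0]
      rintro ⟨p, q⟩ hs
      by_cases e1 : ((p, q) : ℕ × ℕ) = (i, j)
      · rw [Prod.mk.injEq] at e1
        obtain ⟨rfl, rfl⟩ := e1
        exact ⟨le_rfl, le_rfl⟩
      · by_cases e2 : ((p, q) : ℕ × ℕ) = (hIdx D i j, kIdx n D i j)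
        · rw [Prod.mk.injEq] at e2
          obtain ⟨rfl, rfl⟩ := e2
          exact ⟨by omega, by omega⟩
        · exfalso
          apply hs
          simp [ladderMove, e1, e2]
    · rw [hval 0]
      rintro ⟨p, q⟩ htrue hfalse
      by_cases e1 : ((p, q) : ℕ × ℕ) = (i, j)
      · rw [e1] at htrue
        simp [ladderMove] at htrue
      · by_cases e2 : ((p, q) : ℕ × ℕ) = (hIdx D i j, kIdx n D i j)
        · rw [Prod.mk.injEq] at e2
          obtain ⟨rfl, rfl⟩ := e2
          exact ⟨hh2, by omega⟩
        · exfalso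
          have : ladderMove n D i j (p, q) = D (p, q) := by
            simp [ladderMove, e1, e2]
          rw [this, hfalse] at htrue
          exact Bool.noConfusion htrue
  · by_cases hB : hIdx D i j < maxBumpRow n D i j
    · -- Case (ii): recurse through (a, j) with a = maxBumpRow.
      have hamov := part1 n D i j hmov hB
      have hne : ((Finset.Ico (hIdx D i j) i).filter
          fun p => ∃ q ∈ Finset.Icc j (kIdx n D i j), D (p, q) = false).Nonempty := by
        by_contra hcon
        rw [Finset.not_nonempty_iff_eq_empty] at hcon
        have h0 : maxBumpRow n D i j = 0 := by rw [maxBumpRow, hcon, Finset.sup_empty]; rfl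
        omega
      have hmem : maxBumpRow n D i j ∈ (Finset.Ico (hIdx D i j) i).filter
          fun p => ∃ q ∈ Finset.Icc j (kIdx n D i j), D (p, q) = false := sup_id_mem hne
      rw [Finset.mem_filter, Finset.mem_Ico] at hmem
      obtain ⟨⟨hha, hai⟩, t, ht, htb⟩ := hmem
      rw [Finset.mem_Icc] at ht
      have htj : t ≠ j := by
        intro he
        rw [he, hamov.1] at htb
        exact Bool.noConfusion htb
      have hinvA : Inv n D (maxBumpRow n D i j) j :=
        ⟨hamov.1, ⟨hIdx D i j, hh1, hB, hh3⟩, hj1, by omega, t, by omega, by omega, htb⟩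
      -- measure decreases for the inner call
      have hle2 : hIdx D i j ≤ hIdx D (maxBumpRow n D i j) j :=
        le_hIdx D (maxBumpRow n D i j) j (hIdx D i j) hh1 hB hh3
      have hkan : kIdx n D (maxBumpRow n D i j) j ≤ n := kIdx_le_n n D _ j
      have hlt1 : (maxBumpRow n D i j - hIdx D (maxBumpRow n D i j) j) * (n + 2)
          + (kIdx n D (maxBumpRow n D i j) j - j)
          < (i - hIdx D i j) * (n + 2) + (kIdx n D i j - j) :=
        arith1 (by omega) (by omega)
      have hmu : mu n D (maxBumpRow n D i j) j < mu n D i j :=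
        mu_lt_mu_of_inner n D i j _ j hlt1
      obtain ⟨F₁, hF₁1, hF₁s, hφ₁, hc1', hc2'⟩ :=
        IH (mu n D (maxBumpRow n D i j) j) (by omega) D (maxBumpRow n D i j) j le_rfl hinvA
      -- the stabilized inner value
      have hD'ij : moveAux n F₁ D (maxBumpRow n D i j) j (i, j) = true := by
        by_cases hchg : moveAux n F₁ D (maxBumpRow n D i j) j (i, j) = D (i, j)
        · rw [hchg, hcross]
        · have h5 : i ≤ maxBumpRow n D i j := (hc1' (i, j) hchg).1
          omega
      have hD'h : moveAux n F₁ D (maxBumpRow n D i j) j (hIdx D i j, j) = false := by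
        cases hx : moveAux n F₁ D (maxBumpRow n D i j) j (hIdx D i j, j) with
        | false => rfl
        | true =>
            have h5 : j < j := (hc2' (hIdx D i j, j) hx hh3).2
            omega
      have hD'k : moveAux n F₁ D (maxBumpRow n D i j) j (i, kIdx n D i j) = false := by
        cases hx : moveAux n F₁ D (maxBumpRow n D i j) j (i, kIdx n D i j) with
        | false => rfl
        | true =>
            have h5 : i < maxBumpRow n D i j := (hc2' (i, kIdx n D i j) hx hk3).1
            omega
      have hinvO : Inv n (moveAux n F₁ D (maxBumpRow n D i j) j) i j :=
        ⟨hD'ij, ⟨hIdx D i j, hh1, hh2, hD'h⟩, hj1, hiN, kIdx n D i j, hk1, hk2, hD'k⟩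
      have hmu' : mu n (moveAux n F₁ D (maxBumpRow n D i j) j) i j < mu n D i j :=
        mu_lt_of_phi_lt n D _ i j i j hiN hφ₁
      obtain ⟨F₂, hF₂1, hF₂s, hφ₂, hc1'', hc2''⟩ :=
        IH (mu n (moveAux n F₁ D (maxBumpRow n D i j) j) i j) (by omega)
          (moveAux n F₁ D (maxBumpRow n D i j) j) i j le_rfl hinvO
      have hstep : ∀ m, max F₁ F₂ ≤ m → moveAux n (m + 1) D i j
          = moveAux n F₂ (moveAux n F₁ D (maxBumpRow n D i j) j) i j := by
        intro m hm
        have e1 : moveAux n m D (maxBumpRow n D i j) j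
            = moveAux n F₁ D (maxBumpRow n D i j) j :=
          hF₁s m (le_trans (le_max_left _ _) hm)
        have e2 : moveAux n m (moveAux n F₁ D (maxBumpRow n D i j) j) i j
            = moveAux n F₂ (moveAux n F₁ D (maxBumpRow n D i j) j) i j :=
          hF₂s m (le_trans (le_max_right _ _) hm)
        calc moveAux n (m + 1) D i j
            = moveAux n m (moveAux n m D (maxBumpRow n D i j) j) i j := by
              simp only [moveAux]
              rw [if_neg hA, if_pos hB]
          _ = moveAux n F₂ (moveAux n F₁ D (maxBumpRow n D i j) j) i j := by rw [e1, e2]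
      have hFval : moveAux n (max F₁ F₂ + 1) D i j
          = moveAux n F₂ (moveAux n F₁ D (maxBumpRow n D i j) j) i j := hstep _ le_rfl
      refine ⟨max F₁ F₂ + 1, by omega, ?_, ?_, ?_, ?_⟩
      · intro F' hF'
        obtain ⟨m, rfl⟩ : ∃ m, F' = m + 1 := ⟨F' - 1, by omega⟩
        rw [hstep m (by omega), hFval]
      · rw [hFval]
        exact lt_trans hφ₂ hφ₁
      · rw [hFval]
        intro s hs
        by_cases hchg : moveAux n F₂ (moveAux n F₁ D (maxBumpRow n D i j) j) i j s
            = moveAux n F₁ D (maxBumpRow n D i j) j s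
        · have h5 := hc1' s (by rw [← hchg]; exact hs)
          exact ⟨by omega, h5.2⟩
        · exact hc1'' s hchg
      · rw [hFval]
        intro s htrue hfalse
        cases hx : moveAux n F₁ D (maxBumpRow n D i j) j s with
        | true =>
            have h5 := hc2' s hx hfalse
            exact ⟨by omega, h5.2⟩
        | false => exact hc2'' s htrue hx
    · -- Case (iii): recurse through (i, b) with b = minBumpCol.
      have hBle : maxBumpRow n D i j ≤ hIdx D i j := le_of_not_gt hB
      have hBge : hIdx D i j ≤ maxBumpRow n D i j :=
        Finset.le_sup (f := id) (Finset.mem_filter.2 ⟨Finset.mem_Ico.2 ⟨le_rfl, hh2⟩,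
          ⟨j, Finset.mem_Icc.2 ⟨le_rfl, by omega⟩, hh3⟩⟩)
      have hBeq : maxBumpRow n D i j = hIdx D i j := le_antisymm hBle hBge
      have hbne : minBumpCol n D i j ≠ kIdx n D i j := fun he => hA ⟨hBeq, he⟩
      have hSmem : kIdx n D i j ∈ (Finset.Icc (j + 1) (kIdx n D i j)).filter
          fun q => ∃ p ∈ Finset.Icc (hIdx D i j) i, D (p, q) = false :=
        Finset.mem_filter.2 ⟨Finset.mem_Icc.2 ⟨hk1, le_rfl⟩,
          ⟨i, Finset.mem_Icc.2 ⟨le_of_lt hh2, le_rfl⟩, hk3⟩⟩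
      have hble : minBumpCol n D i j ≤ kIdx n D i j := untop_min_le hSmem
      have hblt : minBumpCol n D i j < kIdx n D i j := lt_of_le_of_ne hble hbne
      have hbmov := part2 n D i j hmov hblt
      have hbmem : minBumpCol n D i j ∈ (Finset.Icc (j + 1) (kIdx n D i j)).filter
          fun q => ∃ p ∈ Finset.Icc (hIdx D i j) i, D (p, q) = false :=
        untop_min_mem ⟨_, hSmem⟩
      rw [Finset.mem_filter, Finset.mem_Icc] at hbmem
      obtain ⟨⟨hb1, hb2⟩, p, hp, hpb⟩ := hbmem
      rw [Finset.mem_Icc] at hp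
      have hpi : p < i := by
        rcases Nat.lt_or_ge p i with h | h
        · exact h
        · have hpe : p = i := le_antisymm hp.2 h
          rw [hpe, hbmov.1] at hpb
          exact absurd hpb (by simp)
      have hinvA : Inv n D i (minBumpCol n D i j) :=
        ⟨hbmov.1, ⟨p, by omega, hpi, hpb⟩, by omega, hiN, kIdx n D i j, by omega, hk2, hk3⟩
      -- measure decreases for the inner call
      have hle2 : hIdx D i j ≤ hIdx D i (minBumpCol n D i j) :=
        le_trans hp.1 (le_hIdx D i (minBumpCol n D i j) p (by omega) hpi hpb)
      have hhb_lt : hIdx D i (minBumpCol n D i j) < i := (hIdx_spec D i _ hbmov).2.1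
      have hkb_le : kIdx n D i (minBumpCol n D i j) ≤ kIdx n D i j :=
        kIdx_le n D i (minBumpCol n D i j) (kIdx n D i j) (by omega) hk2 hk3
      have hlt1 : (i - hIdx D i (minBumpCol n D i j)) * (n + 2)
          + (kIdx n D i (minBumpCol n D i j) - minBumpCol n D i j)
          < (i - hIdx D i j) * (n + 2) + (kIdx n D i j - j) :=
        arith2 (by omega) (by omega)
      have hmu : mu n D i (minBumpCol n D i j) < mu n D i j :=
        mu_lt_mu_of_inner n D i j i _ hlt1
      obtain ⟨F₁, hF₁1, hF₁s, hφ₁, hc1', hc2'⟩ :=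
        IH (mu n D i (minBumpCol n D i j)) (by omega) D i (minBumpCol n D i j) le_rfl hinvA
      have hD'ij : moveAux n F₁ D i (minBumpCol n D i j) (i, j) = true := by
        by_cases hchg : moveAux n F₁ D i (minBumpCol n D i j) (i, j) = D (i, j)
        · rw [hchg, hcross]
        · have h5 : minBumpCol n D i j ≤ j := (hc1' (i, j) hchg).2
          omega
      have hD'h : moveAux n F₁ D i (minBumpCol n D i j) (hIdx D i j, j) = false := by
        cases hx : moveAux n F₁ D i (minBumpCol n D i j) (hIdx D i j, j) with
        | false => rfl
        | true =>
            have h5 : minBumpCol n D i j < j := (hc2' (hIdx D i j, j) hx hh3).2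
            omega
      have hD'k : moveAux n F₁ D i (minBumpCol n D i j) (i, kIdx n D i j) = false := by
        cases hx : moveAux n F₁ D i (minBumpCol n D i j) (i, kIdx n D i j) with
        | false => rfl
        | true =>
            have h5 : i < i := (hc2' (i, kIdx n D i j) hx hk3).1
            omega
      have hinvO : Inv n (moveAux n F₁ D i (minBumpCol n D i j)) i j :=
        ⟨hD'ij, ⟨hIdx D i j, hh1, hh2, hD'h⟩, hj1, hiN, kIdx n D i j, hk1, hk2, hD'k⟩
      have hmu' : mu n (moveAux n F₁ D i (minBumpCol n D i j)) i j < mu n D i j :=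
        mu_lt_of_phi_lt n D _ i j i j hiN hφ₁
      obtain ⟨F₂, hF₂1, hF₂s, hφ₂, hc1'', hc2''⟩ :=
        IH (mu n (moveAux n F₁ D i (minBumpCol n D i j)) i j) (by omega)
          (moveAux n F₁ D i (minBumpCol n D i j)) i j le_rfl hinvO
      have hstep : ∀ m, max F₁ F₂ ≤ m → moveAux n (m + 1) D i j
          = moveAux n F₂ (moveAux n F₁ D i (minBumpCol n D i j)) i j := by
        intro m hm
        have e1 : moveAux n m D i (minBumpCol n D i j)
            = moveAux n F₁ D i (minBumpCol n D i j) :=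
          hF₁s m (le_trans (le_max_left _ _) hm)
        have e2 : moveAux n m (moveAux n F₁ D i (minBumpCol n D i j)) i j
            = moveAux n F₂ (moveAux n F₁ D i (minBumpCol n D i j)) i j :=
          hF₂s m (le_trans (le_max_right _ _) hm)
        calc moveAux n (m + 1) D i j
            = moveAux n m (moveAux n m D i (minBumpCol n D i j)) i j := by
              simp only [moveAux]
              rw [if_neg hA, if_neg hB]
          _ = moveAux n F₂ (moveAux n F₁ D i (minBumpCol n D i j)) i j := by rw [e1, e2]
      have hFval : moveAux n (max F₁ F₂ + 1) D i j
          = moveAux n F₂ (moveAux n F₁ D i (minBumpCol n D i j)) i j := hstep _ le_rfl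
      refine ⟨max F₁ F₂ + 1, by omega, ?_, ?_, ?_, ?_⟩
      · intro F' hF'
        obtain ⟨m, rfl⟩ : ∃ m, F' = m + 1 := ⟨F' - 1, by omega⟩
        rw [hstep m (by omega), hFval]
      · rw [hFval]
        exact lt_trans hφ₂ hφ₁
      · rw [hFval]
        intro s hs
        by_cases hchg : moveAux n F₂ (moveAux n F₁ D i (minBumpCol n D i j)) i j s
            = moveAux n F₁ D i (minBumpCol n D i j) s
        · have h5 := hc1' s (by rw [← hchg]; exact hs)
          exact ⟨h5.1, by omega⟩
        · exact hc1'' s hchg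
      · rw [hFval]
        intro s htrue hfalse
        cases hx : moveAux n F₁ D i (minBumpCol n D i j) s with
        | true =>
            have h5 := hc2' s hx hfalse
            exact ⟨h5.1, by omega⟩
        | false => exact hc2'' s htrue hx

end PipeDream

open PipeDream in
/-- the recursion defining M_{ij} is well-defined and terminates:
in case (ii) the tile (a,j) is movable, in case (iii) the tile (i,b) is
movable, and the fuelled recursion stabilizes. -/
theorem stmt4 (n : ℕ) (w : Equiv.Perm ℕ) (D : PipeDream) (hD : D ∈ RPD n w)
    (i j : ℕ) (hmov : Movable D i j) :
    (hIdx D i j < maxBumpRow n D i j → Movable D (maxBumpRow n D i j) j) ∧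
    (maxBumpRow n D i j = hIdx D i j → minBumpCol n D i j < kIdx n D i j →
      Movable D i (minBumpCol n D i j)) ∧
    (∃ F, ∀ F', F ≤ F' → moveAux n F' D i j = moveAux n F D i j) := by
  obtain ⟨hst, -, -⟩ := hD
  obtain ⟨hi1, hj1, hijn⟩ := hst i j hmov.1
  have hi2 : 2 ≤ i := by
    obtain ⟨-, h, h1, h2, -⟩ := hmov
    omega
  have hinv : Inv n D i j := by
    refine ⟨hmov.1, hmov.2, hj1, by omega, n, by omega, le_rfl, ?_⟩
    cases hn : D (i, n) with
    | false => rfl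
    | true =>
        obtain ⟨-, -, h⟩ := hst i n hn
        omega
  refine ⟨part1 n D i j hmov, fun _ h2 => part2 n D i j hmov h2, ?_⟩
  obtain ⟨F, -, hs, -, -, -⟩ := main n (mu n D i j) D i j le_rfl hinv
  exact ⟨F, hs⟩
end
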